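/- arXiv:1312.0248 — 13 statements merged into one kernel-verified Lean document; each statement's English description precedes it below -/
import Mathlib

section
/- Let x_1, ..., x_n be real numbers such that the sum of every subset of size greater than k (with 1 ≤ k ≤ n-1) is negative. Then the number of subsets S ⊆ {1,...,n} (including the empty set) with nonnegative sum is at most C(n-1,k-1) + C(n-1,k-2) + ... + C(n-1,0) + 1. -/
open scoped Classical

/-!
Induct on `n`, with `0 ≤ k ≤ n - 1`. When `k = n - 1` only the full sum is known to be negative,
and complementation injects the nonnegative subsets into the negative ones, so there are at most
`2 ^ (n - 1)` of them. Otherwise pick `t` with `x t < 0` and put `c = -x t > 0`. Nonnegative sets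
avoiding `t` are handled by induction with the same `k`. A nonnegative set `S ∋ t` gives
`T = S \ {t}` with `∑ T ≥ c`, while every `T` of size `≥ k` has `∑ T < c`. The shifted
weights `(k - 1) x i - c` make every set of size `> k - 1` negative but keep all these `T`,
and also `∅`, nonnegative, so induction with `k - 1` counts them. Pascal's rule adds the two
bounds up.
-/

open Finset

theorem Nat.sum_range_choose_succ (m k : ℕ) :
    ∑ i ∈ range k, (m + 1).choose i =
      ∑ i ∈ range k, m.choose i + ∑ i ∈ range (k - 1), m.choose i := by
  induction k with
  | zero => simp
  | succ k ih =>
    cases k with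
    | zero => simp
    | succ k =>
      simp only [sum_range_succ _ (k + 1), ih, Nat.choose_succ_succ, Nat.add_sub_cancel]
      rw [sum_range_succ _ k]
      ring

theorem Nat.sum_range_choose_add_one (n : ℕ) : ∑ i ∈ range n, n.choose i + 1 = 2 ^ n := by
  rw [← Nat.sum_range_choose, sum_range_succ, Nat.choose_self]

variable {ι : Type*}

theorem card_filter_powerset_insert_le [DecidableEq ι] (p : Finset ι → Prop) [DecidablePred p]
    (t : ι) (V : Finset ι) :
    #{S ∈ (insert t V).powerset | p S} ≤
      #{S ∈ V.powerset | p S} + #{T ∈ V.powerset | p (insert t T)} := by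
  rw [powerset_insert, filter_union, filter_image]
  exact (card_union_le _ _).trans (Nat.add_le_add_left card_image_le _)

theorem two_mul_card_filter_powerset_nonneg_le [DecidableEq ι] {U : Finset ι} {x : ι → ℝ}
    (hU : ∑ i ∈ U, x i < 0) :
    2 * #{S ∈ U.powerset | 0 ≤ ∑ i ∈ S, x i} ≤ 2 ^ #U := by
  have hcompl : #{S ∈ U.powerset | 0 ≤ ∑ i ∈ S, x i} ≤
      #{S ∈ U.powerset | ¬0 ≤ ∑ i ∈ S, x i} := by
    refine card_le_card_of_injOn (U \ ·) (fun S hS => ?_) (fun S₁ hS₁ S₂ hS₂ hEq => ?_)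
    · simp only [coe_filter, mem_powerset, Set.mem_ofPred_eq] at hS ⊢
      have := sum_sdiff (f := x) hS.1
      exact ⟨sdiff_subset, by linarith⟩
    · simp only [coe_filter, mem_powerset, Set.mem_ofPred_eq] at hS₁ hS₂
      rw [← Finset.sdiff_sdiff_eq_self hS₁.1, ← Finset.sdiff_sdiff_eq_self hS₂.1]
      exact congrArg (U \ ·) hEq
  have := card_filter_add_card_filter_not (s := U.powerset) (fun S => 0 ≤ ∑ i ∈ S, x i)
  rw [card_powerset] at this
  omega

theorem card_filter_powerset_nonneg_le_of_sum_neg [DecidableEq ι] {n : ℕ} {U : Finset ι}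
    {x : ι → ℝ} (hU : #U = n + 1) (hneg : ∑ i ∈ U, x i < 0) :
    #{S ∈ U.powerset | 0 ≤ ∑ i ∈ S, x i} ≤ ∑ i ∈ range n, n.choose i + 1 := by
  have := two_mul_card_filter_powerset_nonneg_le hneg
  rw [hU, pow_succ, ← Nat.sum_range_choose_add_one] at this
  omega

section Shift

variable {V : Finset ι} {x : ι → ℝ} {c : ℝ} {j : ℕ}

theorem sum_mul_sub (T : Finset ι) :
    ∑ i ∈ T, (j * x i - c) = j * ∑ i ∈ T, x i - #T * c := by
  simp [sum_sub_distrib, mul_sum]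

theorem sum_mul_sub_neg (hc : 0 < c) (hx : ∀ T ⊆ V, j < #T → ∑ i ∈ T, x i < c)
    {T : Finset ι} (hT : T ⊆ V) (hcard : j < #T) : ∑ i ∈ T, (j * x i - c) < 0 := by
  rw [sum_mul_sub]
  have hjT : (j : ℝ) + 1 ≤ #T := by exact_mod_cast hcard
  have := mul_le_mul_of_nonneg_left (hx T hT hcard).le (Nat.cast_nonneg j)
  nlinarith

/-- The `+ 1` accounts for `∅`, which has sum `0 < c` before the shift. -/
theorem card_filter_powerset_ge_add_one_le (hc : 0 < c)
    (hx : ∀ T ⊆ V, j < #T → ∑ i ∈ T, x i < c) :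
    #{T ∈ V.powerset | c ≤ ∑ i ∈ T, x i} + 1 ≤
      #{T ∈ V.powerset | 0 ≤ ∑ i ∈ T, (j * x i - c)} := by
  have hempty : ∅ ∉ ({T ∈ V.powerset | c ≤ ∑ i ∈ T, x i} : Finset _) := by
    simp [hc]
  rw [← card_insert_of_notMem hempty]
  refine card_le_card fun T hT => ?_
  rcases mem_insert.mp hT with rfl | hT
  · simp
  · simp only [mem_filter, mem_powerset] at hT ⊢
    refine ⟨hT.1, ?_⟩
    have hcard : (#T : ℝ) ≤ j := by
      exact_mod_cast not_lt.mp fun h => (hx T hT.1 h).not_ge hT.2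
    rw [sum_mul_sub]
    nlinarith

end Shift

theorem card_filter_powerset_nonneg_le [DecidableEq ι] {n k : ℕ} {U : Finset ι} {x : ι → ℝ}
    (hk : k ≤ n) (hU : #U = n + 1) (h : ∀ S ⊆ U, k < #S → ∑ i ∈ S, x i < 0) :
    #{S ∈ U.powerset | 0 ≤ ∑ i ∈ S, x i} ≤ ∑ i ∈ range k, n.choose i + 1 := by
  induction n generalizing k U x with
  | zero =>
    obtain rfl : k = 0 := by omega
    exact card_filter_powerset_nonneg_le_of_sum_neg hU (h U subset_rfl (by omega))
  | succ m ih =>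
    have hU_neg : ∑ i ∈ U, x i < 0 := h U subset_rfl (by omega)
    rcases hk.eq_or_lt with rfl | hk
    · exact card_filter_powerset_nonneg_le_of_sum_neg hU hU_neg
    obtain ⟨t, htU, hxt⟩ : ∃ t ∈ U, x t < 0 := exists_lt_of_sum_lt (by simpa using hU_neg)
    set V := U.erase t
    have htV : t ∉ V := notMem_erase t U
    have hV : #V = m + 1 := by rw [card_erase_of_mem htU, hU]; rfl
    have hVU : V ⊆ U := erase_subset t U
    have hx_insert : ∀ T ⊆ V, k - 1 < #T → ∑ i ∈ T, x i < -x t := by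
      intro T hT hcard
      have := h (insert t T) (insert_subset htU (hT.trans hVU))
        (by rw [card_insert_of_notMem fun h => htV (hT h)]; omega)
      rw [sum_insert fun h => htV (hT h)] at this
      linarith
    have hwith_t : #{T ∈ V.powerset | 0 ≤ ∑ i ∈ insert t T, x i} =
        #{T ∈ V.powerset | -x t ≤ ∑ i ∈ T, x i} := by
      refine congrArg card (filter_congr fun T hT => ?_)
      rw [sum_insert fun h => htV (mem_powerset.mp hT h)]
      constructor <;> intro <;> linarith
    have hsplit := card_filter_powerset_insert_le (fun S => 0 ≤ ∑ i ∈ S, x i) t V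
    rw [insert_erase htU] at hsplit
    have hwithout_t := ih (by omega) hV fun S hS => h S (hS.trans hVU)
    have hshift := card_filter_powerset_ge_add_one_le (neg_pos.mpr hxt) hx_insert
    have hshift_bound := ih (k := k - 1) (by omega) hV
      fun T hT => sum_mul_sub_neg (neg_pos.mpr hxt) hx_insert hT
    rw [Nat.sum_range_choose_succ]
    omega

theorem stmt_0_general (n k : ℕ) (hk2 : k ≤ n - 1) (x : Fin n → ℝ)
    (h : ∀ S : Finset (Fin n), k < S.card → ∑ i ∈ S, x i < 0) :
    (Finset.univ.filter (fun S : Finset (Fin n) => 0 ≤ ∑ i ∈ S, x i)).card ≤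
      (∑ i ∈ Finset.range k, (n - 1).choose i) + 1 := by
  rcases n with _ | n
  · exact (card_filter_le _ _).trans (by simp)
  · simpa [powerset_univ] using card_filter_powerset_nonneg_le (U := univ) hk2 (by simp)
      fun S _ => h S

theorem stmt_0 (n k : ℕ) (hk1 : 1 ≤ k) (hk2 : k ≤ n - 1) (x : Fin n → ℝ)
    (h : ∀ S : Finset (Fin n), k < S.card → ∑ i ∈ S, x i < 0) :
    (Finset.univ.filter (fun S : Finset (Fin n) => 0 ≤ ∑ i ∈ S, x i)).card ≤
      (∑ i ∈ Finset.range k, (n - 1).choose i) + 1 :=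
  stmt_0_general n k hk2 x h
end

section
/- Let 1 ≤ t ≤ k < n be integers and let x_1, ..., x_n be real numbers of which exactly t are nonnegative. Suppose the sum of every subset of size greater than k is negative. Then the number of subsets of {1,...,n} with nonnegative sum (including the empty set) is at most 2^{t-1} · (C(n-t,k-t) + C(n-t,k-t-1) + ... + C(n-t,0) + 1). -/
/-!
Let `P` be the set of nonnegative coordinates. A set `S` with nonnegative sum splits as
`A ∪ B` with `A ⊆ P`, `B ⊆ Pᶜ`, and `|B| ≤ k - t`, since `P ∪ B` has sum at least that of `S`
and more than `k` elements otherwise. Each `A` goes with `B = ∅`, which gives `2^t` sets. For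
`B ≠ ∅`, pair `A` with `P \ A`: the sum over `P ∪ E` is negative whenever `E ⊆ Pᶜ` has
`k - t + 1` elements, and this bounds the number of `B` with `0 ≤ x(A ∪ B)` by the number of
`B` with `x((P \ A) ∪ B) < 0`. So each pair `{A, P \ A}` is completed by at most
`#{B ⊆ Pᶜ : 1 ≤ |B| ≤ k - t}` sets `B` in total.
-/

open Finset

section SizeBand

variable {α : Type*}

def sizeBand (N : Finset α) (m M : ℕ) : Finset (Finset α) :=
  N.powerset.filter fun B => m ≤ B.card ∧ B.card ≤ M

theorem mem_sizeBand {N B : Finset α} {m M : ℕ} :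
    B ∈ sizeBand N m M ↔ B ⊆ N ∧ m ≤ B.card ∧ B.card ≤ M := by
  rw [sizeBand, mem_filter, mem_powerset]

theorem sizeBand_zero_right (N N' : Finset α) (m : ℕ) : sizeBand N m 0 = sizeBand N' m 0 := by
  ext B
  simp only [mem_sizeBand, Nat.le_zero, card_eq_zero]
  constructor <;> rintro ⟨-, hm, rfl⟩ <;> exact ⟨empty_subset _, hm, rfl⟩

theorem empty_notMem_sizeBand_one (N : Finset α) (M : ℕ) : ∅ ∉ sizeBand N 1 M := by
  simp [mem_sizeBand]

theorem sizeBand_zero_left [DecidableEq α] (N : Finset α) (M : ℕ) :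
    sizeBand N 0 M = insert ∅ (sizeBand N 1 M) := by
  ext B
  rcases B.eq_empty_or_nonempty with rfl | hB
  · simp [mem_sizeBand]
  · simp [mem_sizeBand, hB.ne_empty, Nat.one_le_iff_ne_zero, hB.card_pos.ne']

theorem card_sizeBand_zero_left (N : Finset α) (M : ℕ) :
    (sizeBand N 0 M).card = ∑ i ∈ range (M + 1), N.card.choose i := by
  rw [card_eq_sum_card_fiberwise (f := card) (t := range (M + 1))
    fun B hB => mem_range.2 (Nat.lt_succ_of_le (mem_sizeBand.1 hB).2.2)]
  refine sum_congr rfl fun i hi => ?_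
  rw [← card_powersetCard]
  congr 1
  ext B
  simp only [mem_filter, mem_sizeBand, mem_powersetCard, mem_range] at hi ⊢
  exact ⟨fun h => ⟨h.1.1, h.2⟩, fun h => ⟨⟨h.1, Nat.zero_le _, by omega⟩, h.2⟩⟩

variable [DecidableEq α] (w : α → ℝ)

theorem card_filter_sizeBand_succ (p : ℝ → Prop) [DecidablePred p] {N : Finset α} {a : α}
    (ha : a ∈ N) (m M : ℕ) :
    ((sizeBand N m (M + 1)).filter fun B => p (∑ i ∈ B, w i)).card =
      ((sizeBand (N.erase a) m (M + 1)).filter fun B => p (∑ i ∈ B, w i)).card +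
      ((sizeBand (N.erase a) (m - 1) M).filter fun B => p (w a + ∑ i ∈ B, w i)).card := by
  conv_lhs => rw [← insert_erase ha]
  simp only [sizeBand, filter_filter, card_filter]
  rw [sum_powerset_insert (notMem_erase a N)]
  congr 1
  refine sum_congr rfl fun B hB => ?_
  have haB : a ∉ B := fun h => notMem_erase a N (mem_powerset.1 hB h)
  rw [card_insert_of_notMem haB, sum_insert haB]
  simp only [show m ≤ B.card + 1 ∧ B.card + 1 ≤ M + 1 ↔ m - 1 ≤ B.card ∧ B.card ≤ M by omega]

theorem card_sizeBand_light_le_heavy_of_card_eq {N : Finset α} {m M : ℕ} (hN : N.card = m + M)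
    {θ δ : ℝ} (hθ : θ < ∑ i ∈ N, w i) :
    ((sizeBand N m M).filter fun B => ∑ i ∈ B, w i ≤ δ).card ≤
      ((sizeBand N m M).filter fun B => θ - δ < ∑ i ∈ B, w i).card := by
  refine card_le_card_of_injOn (N \ ·) (fun B hB => ?_) (fun B hB C hC hBC => ?_)
  · simp only [coe_filter, Set.mem_ofPred_eq, mem_sizeBand] at hB
    obtain ⟨⟨hBN, hmB, hBM⟩, hBδ⟩ := hB
    simp only [coe_filter, Set.mem_ofPred_eq, mem_sizeBand, sum_sdiff_eq_sub hBN,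
      card_sdiff_of_subset hBN]
    exact ⟨⟨sdiff_subset, by omega, by omega⟩, by linarith⟩
  · simp only [coe_filter, Set.mem_ofPred_eq, mem_sizeBand] at hB hC
    rw [← Finset.sdiff_sdiff_eq_self hB.1.1, ← Finset.sdiff_sdiff_eq_self hC.1.1]
    exact congrArg (N \ ·) hBC

theorem lt_sum_erase_of_lt_sum {N : Finset α} (hw : ∀ i ∈ N, 0 ≤ w i) {a : α} (ha : a ∈ N)
    (hmax : ∀ b ∈ N, w b ≤ w a) {m M : ℕ} (hmM : m + (M + 1) < N.card) {θ : ℝ}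
    (hθ : ∀ E ⊆ N, E.card = m + (M + 1) → θ < ∑ i ∈ E, w i) :
    ∀ E ⊆ N.erase a, E.card = m - 1 + M → θ - 2 * w a < ∑ i ∈ E, w i := by
  intro E hE hEc
  have haE : a ∉ E := fun h => notMem_erase a N (hE h)
  have hEN : E ⊆ N := hE.trans (erase_subset a N)
  rcases Nat.eq_zero_or_pos m with rfl | hm
  · have := hθ (insert a E) (insert_subset ha hEN) (by rw [card_insert_of_notMem haE]; omega)
    rw [sum_insert haE] at this
    linarith [hw a ha]
  · -- `E ∪ {a}` is one element short, so add some `b ≠ a`, which weighs at most `w a`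
    obtain ⟨b, hb⟩ : ((N.erase a) \ E).Nonempty := by
      rw [← card_pos, card_sdiff_of_subset hE, card_erase_of_mem ha]
      omega
    obtain ⟨hbNa, hbE⟩ := mem_sdiff.1 hb
    have habE : a ∉ insert b E := by
      rw [mem_insert, not_or]
      exact ⟨(ne_of_mem_erase hbNa).symm, haE⟩
    have := hθ (insert a (insert b E))
      (insert_subset ha (insert_subset (mem_of_mem_erase hbNa) hEN))
      (by rw [card_insert_of_notMem habE, card_insert_of_notMem hbE]; omega)
    rw [sum_insert habE, sum_insert hbE] at this
    linarith [hmax b (mem_of_mem_erase hbNa)]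

/-- Induct on `N`, removing a heaviest element; when `m + M = #N`, complementation in `N` maps
light sets to heavy ones. -/
theorem card_sizeBand_light_le_heavy {N : Finset α} (hw : ∀ i ∈ N, 0 ≤ w i) {m M : ℕ}
    (hmM : m + M ≤ N.card) {θ : ℝ} (hθ : ∀ E ⊆ N, E.card = m + M → θ < ∑ i ∈ E, w i) (δ : ℝ) :
    ((sizeBand N m M).filter fun B => ∑ i ∈ B, w i ≤ δ).card ≤
      ((sizeBand N m M).filter fun B => θ - δ < ∑ i ∈ B, w i).card := by
  induction N using Finset.strongInduction generalizing m M θ δ with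
  | H N ih =>
  rcases hmM.eq_or_lt with hN | hN
  · exact card_sizeBand_light_le_heavy_of_card_eq w hN.symm (hθ N Subset.rfl hN.symm)
  obtain ⟨a, ha, hmax⟩ := N.exists_max_image w (card_pos.1 (by omega))
  have hNa : (N.erase a).card = N.card - 1 := card_erase_of_mem ha
  have ih_erase := @ih (N.erase a) (erase_ssubset ha) fun i hi => hw i (mem_of_mem_erase hi)
  have hθ_erase : ∀ E ⊆ N.erase a, E.card = m + M → θ < ∑ i ∈ E, w i :=
    fun E hE => hθ E (hE.trans (erase_subset a N))
  cases M with
  | zero =>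
    rw [sizeBand_zero_right N (N.erase a)]
    exact ih_erase (by omega) hθ_erase δ
  | succ M =>
    rw [card_filter_sizeBand_succ w (· ≤ δ) ha, card_filter_sizeBand_succ w (θ - δ < ·) ha]
    refine add_le_add (ih_erase (by omega) hθ_erase δ) ?_
    have hle (s : ℝ) : w a + s ≤ δ ↔ s ≤ δ - w a := by constructor <;> intro <;> linarith
    have hlt (s : ℝ) : θ - δ < w a + s ↔ θ - 2 * w a - (δ - w a) < s := by
      constructor <;> intro <;> linarith
    simpa only [hle, hlt] using ih_erase (m := m - 1) (M := M) (by omega)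
      (lt_sum_erase_of_lt_sum w hw ha hmax hN hθ) (δ - w a)

end SizeBand

section Counting

variable {ι : Type*} [DecidableEq ι]

theorem card_filter_le_sum_card_filter_union [Fintype ι] (p : Finset ι → Prop) [DecidablePred p]
    (P : Finset ι) {𝔅 : Finset (Finset ι)} (h𝔅 : ∀ S, p S → S \ P ∈ 𝔅) :
    (univ.filter p).card ≤ ∑ B ∈ 𝔅, (P.powerset.filter fun A => p (A ∪ B)).card :=
  calc (univ.filter p).card
      ≤ (𝔅.biUnion fun B => (P.powerset.filter fun A => p (A ∪ B)).image (· ∪ B)).card := by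
        refine card_le_card fun S hS => mem_biUnion.2 ⟨S \ P, h𝔅 S (mem_filter.1 hS).2, ?_⟩
        have hunion : S ∩ P ∪ S \ P = S := sup_inf_sdiff S P
        refine mem_image.2 ⟨S ∩ P, mem_filter.2 ⟨mem_powerset.2 inter_subset_right, ?_⟩, hunion⟩
        rw [hunion]
        exact (mem_filter.1 hS).2
    _ ≤ ∑ B ∈ 𝔅, ((P.powerset.filter fun A => p (A ∪ B)).image (· ∪ B)).card := card_biUnion_le
    _ ≤ _ := sum_le_sum fun _ _ => card_image_le

theorem two_mul_sum_card_filter_powerset_le {β : Type*} (P : Finset ι) (𝔅 : Finset β)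
    (R : Finset ι → β → Prop) [DecidableRel R]
    (hR : ∀ A ⊆ P, (𝔅.filter (R A)).card + (𝔅.filter (R (P \ A))).card ≤ 𝔅.card) :
    2 * ∑ B ∈ 𝔅, (P.powerset.filter (R · B)).card ≤ 2 ^ P.card * 𝔅.card := by
  have hswap : ∑ B ∈ 𝔅, (P.powerset.filter (R · B)).card =
      ∑ A ∈ P.powerset, (𝔅.filter (R A)).card := by
    simp only [card_filter]
    exact sum_comm
  have hcompl : ∑ A ∈ P.powerset, (𝔅.filter (R A)).card =
      ∑ A ∈ P.powerset, (𝔅.filter (R (P \ A))).card :=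
    sum_nbij' (P \ ·) (P \ ·) (fun _ _ => mem_powerset.2 sdiff_subset)
      (fun _ _ => mem_powerset.2 sdiff_subset)
      (fun A hA => Finset.sdiff_sdiff_eq_self (mem_powerset.1 hA))
      (fun A hA => Finset.sdiff_sdiff_eq_self (mem_powerset.1 hA))
      (fun A hA => by rw [Finset.sdiff_sdiff_eq_self (mem_powerset.1 hA)])
  calc 2 * ∑ B ∈ 𝔅, (P.powerset.filter (R · B)).card
      = ∑ A ∈ P.powerset, ((𝔅.filter (R A)).card + (𝔅.filter (R (P \ A))).card) := by
        rw [two_mul, sum_add_distrib, ← hcompl, hswap]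
    _ ≤ ∑ _A ∈ P.powerset, 𝔅.card := sum_le_sum fun A hA => hR A (mem_powerset.1 hA)
    _ = 2 ^ P.card * 𝔅.card := by rw [sum_const, card_powerset, smul_eq_mul]

variable (x : ι → ℝ)

theorem card_sdiff_le_of_sum_nonneg {P S : Finset ι} {k : ℕ} (hP : ∀ i ∈ P, 0 ≤ x i)
    (h : ∀ T : Finset ι, k < T.card → ∑ i ∈ T, x i < 0) (hS : 0 ≤ ∑ i ∈ S, x i) :
    (S \ P).card ≤ k - P.card := by
  by_contra hlarge
  have hcard : k < (P ∪ S).card := by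
    rw [← union_sdiff_self_eq_union, card_union_of_disjoint disjoint_sdiff]
    omega
  refine (h _ hcard).not_ge (hS.trans (sum_le_sum_of_subset_of_nonneg subset_union_right ?_))
  exact fun i hi hiS => hP i ((mem_union.1 hi).resolve_right hiS)

theorem card_nonneg_add_card_nonneg_sdiff_le {P N : Finset ι} (hPN : Disjoint P N)
    (hx : ∀ i ∈ N, x i ≤ 0) {m M : ℕ} (hmM : m + M ≤ N.card)
    (hneg : ∀ E ⊆ N, E.card = m + M → ∑ i ∈ P ∪ E, x i < 0) {A : Finset ι} (hA : A ⊆ P) :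
    ((sizeBand N m M).filter fun B => 0 ≤ ∑ i ∈ A ∪ B, x i).card +
      ((sizeBand N m M).filter fun B => 0 ≤ ∑ i ∈ (P \ A) ∪ B, x i).card ≤
      (sizeBand N m M).card := by
  have hsum : ∀ C ⊆ P, ∀ B ∈ sizeBand N m M,
      ∑ i ∈ C ∪ B, x i = ∑ i ∈ C, x i - ∑ i ∈ B, -x i := fun C hC B hB => by
    rw [sum_union (hPN.mono hC (mem_sizeBand.1 hB).1), sum_neg_distrib, sub_neg_eq_add]
  have key := card_sizeBand_light_le_heavy (fun i => -x i)
    (fun i hi => neg_nonneg.2 (hx i hi)) hmM (θ := ∑ i ∈ P, x i) (fun E hE hEc => by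
      have := hneg E hE hEc
      rw [sum_union (hPN.mono_right hE)] at this
      rw [sum_neg_distrib]
      linarith) (∑ i ∈ A, x i)
  calc _ = ((sizeBand N m M).filter fun B => ∑ i ∈ B, -x i ≤ ∑ i ∈ A, x i).card +
        ((sizeBand N m M).filter fun B => 0 ≤ ∑ i ∈ (P \ A) ∪ B, x i).card := by
        congr 2
        exact filter_congr fun B hB => by rw [hsum A hA B hB, sub_nonneg]
    _ ≤ ((sizeBand N m M).filter fun B => ¬ 0 ≤ ∑ i ∈ (P \ A) ∪ B, x i).card +
        ((sizeBand N m M).filter fun B => 0 ≤ ∑ i ∈ (P \ A) ∪ B, x i).card := by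
      refine add_le_add_left (key.trans_eq ?_) _
      congr 1
      exact filter_congr fun B hB => by
        rw [hsum _ sdiff_subset B hB, sum_sdiff_eq_sub hA, not_le, sub_neg]
    _ = _ := by rw [add_comm, card_filter_add_card_filter_not]

end Counting

theorem stmt_1 (n k t : ℕ) (ht : 1 ≤ t) (htk : t ≤ k) (hkn : k < n) (x : Fin n → ℝ)
    (hcount : (Finset.univ.filter (fun i : Fin n => 0 ≤ x i)).card = t)
    (h : ∀ S : Finset (Fin n), k < S.card → ∑ i ∈ S, x i < 0) :
    (Finset.univ.filter (fun S : Finset (Fin n) => 0 ≤ ∑ i ∈ S, x i)).card ≤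
      2 ^ (t - 1) * ((∑ i ∈ Finset.range (k - t + 1), (n - t).choose i) + 1) := by
  obtain ⟨s, rfl⟩ : ∃ s, t = s + 1 := ⟨t - 1, by omega⟩
  set P := univ.filter fun i : Fin n => 0 ≤ x i
  set r := k - (s + 1) with hr
  have hP : ∀ i ∈ P, 0 ≤ x i := fun i hi => (mem_filter.1 hi).2
  have hPc : ∀ i ∈ Pᶜ, x i ≤ 0 := fun i hi => by
    simp only [P, mem_compl, mem_filter, mem_univ, true_and, not_le] at hi
    exact hi.le
  have hPcard : Pᶜ.card = n - (s + 1) := by rw [card_compl, Fintype.card_fin, hcount]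
  have hband (S : Finset (Fin n)) (hS : 0 ≤ ∑ i ∈ S, x i) : S \ P ∈ sizeBand Pᶜ 0 r :=
    mem_sizeBand.2 ⟨fun i hi => mem_compl.2 (mem_sdiff.1 hi).2, Nat.zero_le _,
      (card_sdiff_le_of_sum_nonneg x hP h hS).trans_eq (by omega)⟩
  have hneg : ∀ E ⊆ Pᶜ, E.card = 1 + r → ∑ i ∈ P ∪ E, x i < 0 := fun E hE hEc =>
    h _ (by rw [card_union_of_disjoint (disjoint_compl_right.mono_right hE)]; omega)
  have hpairs := two_mul_sum_card_filter_powerset_le P (sizeBand Pᶜ 1 r)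
    (fun A B => 0 ≤ ∑ i ∈ A ∪ B, x i) fun A hA =>
      card_nonneg_add_card_nonneg_sdiff_le x disjoint_compl_right hPc (by omega) hneg hA
  rw [hcount, pow_succ', mul_assoc] at hpairs
  calc _ ≤ ∑ B ∈ sizeBand Pᶜ 0 r, (P.powerset.filter fun A => 0 ≤ ∑ i ∈ A ∪ B, x i).card :=
        card_filter_le_sum_card_filter_union _ P hband
    _ = (P.powerset.filter fun A => 0 ≤ ∑ i ∈ A ∪ ∅, x i).card +
        ∑ B ∈ sizeBand Pᶜ 1 r, (P.powerset.filter fun A => 0 ≤ ∑ i ∈ A ∪ B, x i).card := by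
      rw [sizeBand_zero_left, sum_insert (empty_notMem_sizeBand_one _ _)]
    _ ≤ 2 ^ (s + 1) + 2 ^ s * (sizeBand Pᶜ 1 r).card :=
      add_le_add ((card_filter_le _ _).trans_eq (by rw [card_powerset, hcount]))
        (Nat.le_of_mul_le_mul_left hpairs two_pos)
    _ = _ := by
      rw [Nat.add_sub_cancel, ← hPcard, ← card_sizeBand_zero_left, sizeBand_zero_left,
        card_insert_of_notMem (empty_notMem_sizeBand_one _ _)]
      ring
end

section
/- For integers 1 ≤ t < k < n-1, the quantity 2^{t-1}(∑_{i=0}^{k-t} C(n-t,i) + 1) is strictly greater than 2^{t}(∑_{i=0}^{k-t-1} C(n-t-1,i) + 1). In particular the expression 2^{t-1}(∑_{i=0}^{k-t} C(n-t,i) + 1) is strictly decreasing in t for 1 ≤ t ≤ k when k < n-1. -/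
/-!
Put `m = n - t - 1` and `a = k - t`, so that `0 < a < m`. Pascal's rule gives
`∑_{i ≤ a} C(m+1, i) = 2 ∑_{i < a} C(m, i) + C(m, a)`, and `C(m, a) ≥ 2` for `0 < a < m`.
Hence the bracket on the right exceeds twice the bracket on the left, which absorbs the extra
factor `2` in `2^t = 2 · 2^(t-1)`.
-/

open Finset

namespace Nat

theorem sum_range_succ_choose_succ (m a : ℕ) :
    ∑ i ∈ range (a + 1), (m + 1).choose i = 2 * ∑ i ∈ range a, m.choose i + m.choose a := by
  have shifted : ∑ i ∈ range a, m.choose (i + 1) + 1 = ∑ i ∈ range a, m.choose i + m.choose a := by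
    rw [← sum_range_succ, sum_range_succ', choose_zero_right]
  rw [sum_range_succ', choose_zero_right]
  simp only [choose_succ_succ', sum_add_distrib]
  omega

theorem two_le_choose {m a : ℕ} (ha : 0 < a) (ham : a < m) : 2 ≤ m.choose a :=
  calc 2 ≤ a + 1 := by omega
    _ = (a + 1).choose a := (choose_succ_self_right a).symm
    _ ≤ m.choose a := choose_le_choose a ham

theorem two_mul_sum_range_choose_add_one_lt {m a : ℕ} (ha : 0 < a) (ham : a < m) :
    2 * (∑ i ∈ range a, m.choose i + 1) < ∑ i ∈ range (a + 1), (m + 1).choose i + 1 := by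
  rw [sum_range_succ_choose_succ]
  have := two_le_choose ha ham
  omega

end Nat

theorem stmt_2 (n k t : ℕ) (ht : 1 ≤ t) (htk : t < k) (hkn : k < n - 1) :
    2 ^ t * ((∑ i ∈ Finset.range (k - t), (n - t - 1).choose i) + 1) <
      2 ^ (t - 1) * ((∑ i ∈ Finset.range (k - t + 1), (n - t).choose i) + 1) := by
  have hbracket := Nat.two_mul_sum_range_choose_add_one_lt (m := n - t - 1) (a := k - t)
    (by omega) (by omega)
  rw [Nat.sub_add_cancel (by omega : 1 ≤ n - t)] at hbracket
  have hpow : 2 ^ t = 2 ^ (t - 1) * 2 := by rw [← pow_succ, Nat.sub_add_cancel ht]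
  rw [hpow, mul_assoc]
  exact Nat.mul_lt_mul_of_pos_left hbracket (by positivity)
end

section
/- Let G be a bipartite graph with parts A and B, with partitions A = A_1 ∪ ... ∪ A_k and B = B_1 ∪ ... ∪ B_l such that for every i, j, in the induced bipartite subgraph G[A_i, B_j] all vertices of A_i have equal degree and all vertices of B_j have equal degree. Let H be the bipartite graph on A ∪ B in which G[A_i, B_j] is replaced by a complete bipartite graph between A_i and B_j whenever G[A_i, B_j] has at least one edge. Then G contains a perfect matching if and only if H contains a perfect matching. -/
open scoped Classical
open Finset

namespace Stmt4Aux

variable {α β : Type} [Fintype α] [Fintype β] {k l : ℕ}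

/-- number of edges between part `i` of `α` and part `j` of `β`. -/
noncomputable def eC (E : α → β → Prop) (pA : α → Fin k) (pB : β → Fin l)
    (i : Fin k) (j : Fin l) : ℕ :=
  (Finset.univ.filter (fun p : α × β => pA p.1 = i ∧ pB p.2 = j ∧ E p.1 p.2)).card

/-- number of elements of part `i` matched into part `j` by `f`. -/
noncomputable def mC (pA : α → Fin k) (pB : β → Fin l) (f : α ≃ β)
    (i : Fin k) (j : Fin l) : ℕ :=
  (Finset.univ.filter (fun a => pA a = i ∧ pB (f a) = j)).card

noncomputable def dA (E : α → β → Prop) (pB : β → Fin l) (a : α) (j : Fin l) : ℕ :=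
  (Finset.univ.filter (fun b => pB b = j ∧ E a b)).card

noncomputable def dB (E : α → β → Prop) (pA : α → Fin k) (b : β) (i : Fin k) : ℕ :=
  (Finset.univ.filter (fun a => pA a = i ∧ E a b)).card

/-- fractional matching weight. -/
noncomputable def w (E : α → β → Prop) (pA : α → Fin k) (pB : β → Fin l) (f : α ≃ β)
    (a : α) (b : β) : ℚ :=
  if E a b then (mC pA pB f (pA a) (pB b) : ℚ) / (eC E pA pB (pA a) (pB b) : ℚ) else 0

variable (E : α → β → Prop) (pA : α → Fin k) (pB : β → Fin l) (f : α ≃ β)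

lemma w_nonneg (a : α) (b : β) : 0 ≤ w E pA pB f a b := by
  unfold w
  split
  · positivity
  · exact le_refl 0

lemma eC_eq_sum_A (i : Fin k) (j : Fin l) :
    eC E pA pB i j = ∑ a ∈ Finset.univ.filter (fun a => pA a = i), dA E pB a j := by
  unfold eC dA
  rw [card_filter, Fintype.sum_prod_type, sum_filter]
  refine Finset.sum_congr rfl fun a _ => ?_
  by_cases h : pA a = i
  · simp only [h, eq_self_iff_true, true_and, if_true, card_filter]
  · simp [h]

lemma eC_eq_sum_B (i : Fin k) (j : Fin l) :
    eC E pA pB i j = ∑ b ∈ Finset.univ.filter (fun b => pB b = j), dB E pA b i := by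
  unfold eC dB
  rw [card_filter, Fintype.sum_prod_type, Finset.sum_comm, sum_filter]
  refine Finset.sum_congr rfl fun b _ => ?_
  by_cases h : pB b = j
  · simp only [h, eq_self_iff_true, true_and, if_true, card_filter]
  · simp [h]

lemma eC_eq_mul_A
    (hregA : ∀ (i : Fin k) (j : Fin l) (a a' : α), pA a = i → pA a' = i →
      (Finset.univ.filter (fun b => pB b = j ∧ E a b)).card =
        (Finset.univ.filter (fun b => pB b = j ∧ E a' b)).card)
    (i : Fin k) (j : Fin l) (a : α) (ha : pA a = i) :
    eC E pA pB i j = (Finset.univ.filter (fun a' => pA a' = i)).card * dA E pB a j := by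
  rw [eC_eq_sum_A]
  have hc : ∀ a' ∈ Finset.univ.filter (fun a => pA a = i), dA E pB a' j = dA E pB a j :=
    fun a' ha' => hregA i j a' a (mem_filter.1 ha').2 ha
  rw [Finset.sum_congr rfl hc, Finset.sum_const, smul_eq_mul]

lemma eC_eq_mul_B
    (hregB : ∀ (i : Fin k) (j : Fin l) (b b' : β), pB b = j → pB b' = j →
      (Finset.univ.filter (fun a => pA a = i ∧ E a b)).card =
        (Finset.univ.filter (fun a => pA a = i ∧ E a b')).card)
    (i : Fin k) (j : Fin l) (b : β) (hb : pB b = j) :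
    eC E pA pB i j = (Finset.univ.filter (fun b' => pB b' = j)).card * dB E pA b i := by
  rw [eC_eq_sum_B]
  have hc : ∀ b' ∈ Finset.univ.filter (fun b => pB b = j), dB E pA b' i = dB E pA b i :=
    fun b' hb' => hregB i j b' b (mem_filter.1 hb').2 hb
  rw [Finset.sum_congr rfl hc, Finset.sum_const, smul_eq_mul]

lemma m_row (i : Fin k) :
    ∑ j, mC pA pB f i j = (Finset.univ.filter (fun a => pA a = i)).card := by
  unfold mC
  simp only [card_filter]
  rw [Finset.sum_comm]
  refine Finset.sum_congr rfl fun a _ => ?_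
  by_cases h : pA a = i
  · simp [h, Finset.sum_ite_eq]
  · simp [h]

lemma m_col (j : Fin l) :
    ∑ i, mC pA pB f i j = (Finset.univ.filter (fun b => pB b = j)).card := by
  unfold mC
  have h1 : ∑ i, (Finset.univ.filter (fun a => pA a = i ∧ pB (f a) = j)).card
      = (Finset.univ.filter (fun a => pB (f a) = j)).card := by
    simp only [card_filter]
    rw [Finset.sum_comm]
    refine Finset.sum_congr rfl fun a _ => ?_
    by_cases h : pB (f a) = j
    · simp [h, Finset.sum_ite_eq]
    · simp [h]
  rw [h1]
  refine Finset.card_bij' (fun a _ => f a) (fun b _ => f.symm b) ?_ ?_ ?_ ?_ <;>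
    simp

lemma m_eq_zero
    (hf : ∀ a, ∃ a' b', pA a' = pA a ∧ pB b' = pB (f a) ∧ E a' b')
    (i : Fin k) (j : Fin l) (h : eC E pA pB i j = 0) : mC pA pB f i j = 0 := by
  by_contra hm
  obtain ⟨a, ha⟩ := Finset.card_ne_zero.1 hm
  obtain ⟨ha1, ha2⟩ := (mem_filter.1 ha).2
  obtain ⟨a', b', h1, h2, h3⟩ := hf a
  have : ((a', b') : α × β) ∈ Finset.univ.filter
      (fun p : α × β => pA p.1 = i ∧ pB p.2 = j ∧ E p.1 p.2) :=
    mem_filter.2 ⟨mem_univ _, by rw [h1, ha1], by rw [h2, ha2], h3⟩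
  have : eC E pA pB i j ≠ 0 := Finset.card_ne_zero.2 ⟨_, this⟩
  exact this h

lemma row_sum
    (hregA : ∀ (i : Fin k) (j : Fin l) (a a' : α), pA a = i → pA a' = i →
      (Finset.univ.filter (fun b => pB b = j ∧ E a b)).card =
        (Finset.univ.filter (fun b => pB b = j ∧ E a' b)).card)
    (hf : ∀ a, ∃ a' b', pA a' = pA a ∧ pB b' = pB (f a) ∧ E a' b')
    (a : α) : ∑ b, w E pA pB f a b = 1 := by
  set i := pA a with hi
  have hAcard : 0 < (Finset.univ.filter (fun a' => pA a' = i)).card :=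
    Finset.card_pos.2 ⟨a, mem_filter.2 ⟨mem_univ a, rfl⟩⟩
  rw [← Finset.sum_fiberwise Finset.univ pB (w E pA pB f a)]
  have h1 : ∀ j, ∑ b ∈ Finset.univ.filter (fun b => pB b = j), w E pA pB f a b
      = (mC pA pB f i j : ℚ) / ((Finset.univ.filter (fun a' => pA a' = i)).card : ℚ) := by
    intro j
    have hc : ∀ b ∈ Finset.univ.filter (fun b => pB b = j), w E pA pB f a b
        = if E a b then (mC pA pB f i j : ℚ) / (eC E pA pB i j : ℚ) else 0 := by
      intro b hb
      unfold w
      rw [(mem_filter.1 hb).2, ← hi]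
    rw [Finset.sum_congr rfl hc, ← Finset.sum_filter, Finset.sum_const, Finset.filter_filter]
    have hd : (Finset.univ.filter (fun b => pB b = j ∧ E a b)).card = dA E pB a j := rfl
    rw [hd, nsmul_eq_mul]
    have he : eC E pA pB i j = (Finset.univ.filter (fun a' => pA a' = i)).card * dA E pB a j :=
      eC_eq_mul_A E pA pB hregA i j a rfl
    by_cases hz : dA E pB a j = 0
    · have he0 : eC E pA pB i j = 0 := by rw [he, hz, mul_zero]
      have hm0 : mC pA pB f i j = 0 := m_eq_zero E pA pB f hf i j he0
      rw [hz, hm0]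
      simp
    · rw [he]
      have h1 : (dA E pB a j : ℚ) ≠ 0 := Nat.cast_ne_zero.2 hz
      have h2 : ((Finset.univ.filter (fun a' => pA a' = i)).card : ℚ) ≠ 0 :=
        Nat.cast_ne_zero.2 hAcard.ne'
      push_cast
      field_simp
  rw [Finset.sum_congr rfl fun j _ => h1 j, ← Finset.sum_div]
  rw [show ∑ j, (mC pA pB f i j : ℚ) = ((∑ j, mC pA pB f i j : ℕ) : ℚ) by push_cast; ring]
  rw [m_row pA pB f i]
  exact div_self (Nat.cast_ne_zero.2 hAcard.ne')

lemma col_sum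
    (hregB : ∀ (i : Fin k) (j : Fin l) (b b' : β), pB b = j → pB b' = j →
      (Finset.univ.filter (fun a => pA a = i ∧ E a b)).card =
        (Finset.univ.filter (fun a => pA a = i ∧ E a b')).card)
    (hf : ∀ a, ∃ a' b', pA a' = pA a ∧ pB b' = pB (f a) ∧ E a' b')
    (b : β) : ∑ a, w E pA pB f a b = 1 := by
  set j := pB b with hj
  have hBcard : 0 < (Finset.univ.filter (fun b' => pB b' = j)).card :=
    Finset.card_pos.2 ⟨b, mem_filter.2 ⟨mem_univ b, rfl⟩⟩
  rw [← Finset.sum_fiberwise Finset.univ pA (fun a => w E pA pB f a b)]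
  have h1 : ∀ i, ∑ a ∈ Finset.univ.filter (fun a => pA a = i), w E pA pB f a b
      = (mC pA pB f i j : ℚ) / ((Finset.univ.filter (fun b' => pB b' = j)).card : ℚ) := by
    intro i
    have hc : ∀ a ∈ Finset.univ.filter (fun a => pA a = i), w E pA pB f a b
        = if E a b then (mC pA pB f i j : ℚ) / (eC E pA pB i j : ℚ) else 0 := by
      intro a ha
      unfold w
      rw [(mem_filter.1 ha).2, ← hj]
    rw [Finset.sum_congr rfl hc, ← Finset.sum_filter, Finset.sum_const, Finset.filter_filter]
    have hd : (Finset.univ.filter (fun a => pA a = i ∧ E a b)).card = dB E pA b i := rfl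
    rw [hd, nsmul_eq_mul]
    have he : eC E pA pB i j = (Finset.univ.filter (fun b' => pB b' = j)).card * dB E pA b i :=
      eC_eq_mul_B E pA pB hregB i j b rfl
    by_cases hz : dB E pA b i = 0
    · have he0 : eC E pA pB i j = 0 := by rw [he, hz, mul_zero]
      have hm0 : mC pA pB f i j = 0 := m_eq_zero E pA pB f hf i j he0
      rw [hz, hm0]
      simp
    · rw [he]
      have h1 : (dB E pA b i : ℚ) ≠ 0 := Nat.cast_ne_zero.2 hz
      have h2 : ((Finset.univ.filter (fun b' => pB b' = j)).card : ℚ) ≠ 0 :=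
        Nat.cast_ne_zero.2 hBcard.ne'
      push_cast
      field_simp
  rw [Finset.sum_congr rfl fun i _ => h1 i, ← Finset.sum_div]
  rw [show ∑ i, (mC pA pB f i j : ℚ) = ((∑ i, mC pA pB f i j : ℕ) : ℚ) by push_cast; ring]
  rw [m_col pA pB f j]
  exact div_self (Nat.cast_ne_zero.2 hBcard.ne')

end Stmt4Aux

open Stmt4Aux in
/-- A bipartite graph with parts `α`, `β`, edge relation `E`, part partitions given by
`pA : α → Fin k`, `pB : β → Fin l` (the fibers are the parts `A_i`, `B_j`).  If within each
pair of parts the graph is biregular, then `G` has a perfect matching iff the auxiliary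
graph `H`, obtained by replacing each nonempty `G[A_i, B_j]` by a complete bipartite graph,
has a perfect matching. -/
theorem stmt_4 (α β : Type) [Fintype α] [Fintype β] (k l : ℕ)
    (E : α → β → Prop) (pA : α → Fin k) (pB : β → Fin l)
    (hregA : ∀ (i : Fin k) (j : Fin l) (a a' : α), pA a = i → pA a' = i →
      (Finset.univ.filter (fun b => pB b = j ∧ E a b)).card =
        (Finset.univ.filter (fun b => pB b = j ∧ E a' b)).card)
    (hregB : ∀ (i : Fin k) (j : Fin l) (b b' : β), pB b = j → pB b' = j →
      (Finset.univ.filter (fun a => pA a = i ∧ E a b)).card =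
        (Finset.univ.filter (fun a => pA a = i ∧ E a b')).card) :
    (∃ f : α ≃ β, ∀ a, E a (f a)) ↔
      (∃ f : α ≃ β, ∀ a, ∃ a' b', pA a' = pA a ∧ pB b' = pB (f a) ∧ E a' b') := by
  constructor
  · rintro ⟨f, hf⟩
    exact ⟨f, fun a => ⟨a, f a, rfl, rfl, hf a⟩⟩
  · rintro ⟨f, hf⟩
    have hall : ∀ s : Finset α,
        s.card ≤ (s.biUnion fun a => Finset.univ.filter (fun b => E a b)).card := by
      intro s
      set T := s.biUnion fun a => Finset.univ.filter (fun b => E a b) with hT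
      have key : (s.card : ℚ) ≤ (T.card : ℚ) := by
        calc (s.card : ℚ) = ∑ _a ∈ s, (1 : ℚ) := by simp
          _ = ∑ a ∈ s, ∑ b, w E pA pB f a b :=
              Finset.sum_congr rfl fun a _ => (row_sum E pA pB f hregA hf a).symm
          _ = ∑ a ∈ s, ∑ b ∈ T, w E pA pB f a b := by
              refine Finset.sum_congr rfl fun a ha => ?_
              refine (Finset.sum_subset (Finset.subset_univ T) ?_).symm
              intro b _ hb
              unfold w
              rw [if_neg]
              intro hE
              exact hb (Finset.mem_biUnion.2 ⟨a, ha, Finset.mem_filter.2 ⟨Finset.mem_univ b, hE⟩⟩)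
          _ = ∑ b ∈ T, ∑ a ∈ s, w E pA pB f a b := Finset.sum_comm
          _ ≤ ∑ b ∈ T, ∑ a, w E pA pB f a b := by
              refine Finset.sum_le_sum fun b _ => ?_
              exact Finset.sum_le_sum_of_subset_of_nonneg (Finset.subset_univ s)
                (fun a _ _ => w_nonneg E pA pB f a b)
          _ = ∑ _b ∈ T, (1 : ℚ) :=
              Finset.sum_congr rfl fun b _ => col_sum E pA pB f hregB hf b
          _ = (T.card : ℚ) := by simp
      exact_mod_cast key
    obtain ⟨g, hginj, hg⟩ :=
      (Finset.all_card_le_biUnion_card_iff_existsInjective'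
        (fun a => Finset.univ.filter (fun b => E a b))).1 hall
    have hcard : Fintype.card α = Fintype.card β := Fintype.card_congr f
    have hbij : Function.Bijective g :=
      (Fintype.bijective_iff_injective_and_card g).2 ⟨hginj, hcard⟩
    exact ⟨Equiv.ofBijective g hbij, fun a => (Finset.mem_filter.1 (hg a)).2⟩
end

section
/- Let G be a bipartite graph with parts A, B partitioned as A = A_1 ∪ ... ∪ A_k, B = B_1 ∪ ... ∪ B_l, such that in each nonempty induced subgraph G[A_i, B_j] all vertices of A_i have equal degree and all vertices of B_j have equal degree. Define the reduced graph H' on [k] ∪ [l] where i ~ j iff G[A_i, B_j] has an edge. If for every subset X ⊆ [k], ∑_{j ∈ N_{H'}(X)} |B_j| ≥ ∑_{i ∈ X} |A_i|, then G has a matching saturating A. -/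
open scoped Classical

/-!
Apply Hall's theorem to `G`. For `S ⊆ A` let `s_i = |S ∩ A_i|` and `n_j = |N(S) ∩ B_j|`.
Biregularity and double counting give `s_i / |A_i| ≤ n_j / |B_j|` whenever `i ~ j` in `H'`.
The Hall condition on `H'` is Hall's condition for the blow-up of `H'`, in which `a ∈ A_i` and
`b ∈ B_j` are adjacent iff `i ~ j`; so there is an injection `f : A → B` along blown-up edges.
Spreading `s_i` evenly over `A_i` and `n_j` over `B_j` then gives, writing `i(a)`, `j(b)` for
the parts of `a`, `b`,
`|S| = ∑_a s_{i(a)} / |A_{i(a)}| ≤ ∑_a n_{j(f a)} / |B_{j(f a)}| ≤ ∑_b n_{j(b)} / |B_{j(b)}| = |N(S)|`.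
-/

open Finset Function

theorem card_mul_card_le_card_mul_card_of_biregular {α β : Type*} (r : α → β → Prop)
    {A S : Finset α} {B N : Finset β} {dA dB : ℕ}
    (hA : ∀ a ∈ A, #(B.bipartiteAbove r a) = dA) (hB : ∀ b ∈ B, #(A.bipartiteBelow r b) = dB)
    (hdB : 0 < dB) (hSA : S ⊆ A) (hNB : N ⊆ B) (hN : ∀ a ∈ S, ∀ b ∈ B, r a b → b ∈ N) :
    #S * #B ≤ #N * #A := by
  have htotal : #A * dA = #B * dB := card_mul_eq_card_mul r hA hB
  have hpart : #S * dA ≤ #N * dB := by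
    refine card_mul_le_card_mul r (fun a ha => ?_) (fun b hb => ?_)
    · rw [← hA a (hSA ha)]
      exact card_le_card fun b hb => by
        simp only [bipartiteAbove, mem_filter] at hb ⊢
        exact ⟨hN a ha b hb.1 hb.2, hb.2⟩
    · rw [← hB b (hNB hb)]
      exact card_le_card (filter_subset_filter _ hSA)
  refine Nat.le_of_mul_le_mul_right ?_ hdB
  calc #S * #B * dB = #S * dA * #A := by rw [mul_assoc, ← htotal]; ring
    _ ≤ #N * dB * #A := Nat.mul_le_mul_right _ hpart
    _ = #N * #A * dB := by ring

section FiberDensity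

variable {α ι : Type*} [Fintype α] [DecidableEq ι] (p : α → ι)

noncomputable def fiberDensity (S : Finset α) (x : α) : ℚ :=
  #{y ∈ S | p y = p x} / #{y | p y = p x}

theorem fiberDensity_nonneg (S : Finset α) (x : α) : 0 ≤ fiberDensity p S x := by
  unfold fiberDensity; positivity

theorem sum_fiberDensity [Fintype ι] (S : Finset α) : ∑ x, fiberDensity p S x = #S := by
  rw [← sum_fiberwise univ p, card_eq_sum_card_fiberwise (f := p) (t := univ)
    (fun _ _ => mem_univ _)]
  push_cast
  refine sum_congr rfl fun i _ => ?_
  have hconst : ∀ x ∈ ({x | p x = i} : Finset α), fiberDensity p S x =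
      #{y ∈ S | p y = i} / #{y | p y = i} := by
    intro x hx
    simp only [fiberDensity, (mem_filter.mp hx).2]
  rw [sum_congr rfl hconst, sum_const, nsmul_eq_mul]
  rcases eq_or_ne (#{y | p y = i} : ℚ) 0 with h | h
  · have hS : #{y ∈ S | p y = i} = 0 := Nat.eq_zero_of_le_zero <|
      (card_le_card (filter_subset_filter _ (subset_univ S))).trans (Nat.cast_eq_zero.mp h).le
    simp [hS]
  · exact mul_div_cancel₀ _ h

end FiberDensity

theorem exists_injective_of_sum_card_fiber_le {α β ι κ : Type*} [Fintype α] [Fintype β]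
    [Fintype κ] [DecidableEq ι] [DecidableEq κ]
    (pA : α → ι) (pB : β → κ) (R : ι → κ → Prop)
    (hall : ∀ X : Finset ι,
      ∑ i ∈ X, #{a | pA a = i} ≤ ∑ j ∈ {j | ∃ i ∈ X, R i j}, #{b | pB b = j}) :
    ∃ f : α → β, Injective f ∧ ∀ a, R (pA a) (pB (f a)) := by
  refine (Fintype.all_card_le_filter_rel_iff_exists_injective
    (fun a b => R (pA a) (pB b))).mp fun S => ?_
  calc #S ≤ #{a | pA a ∈ S.image pA} := card_le_card fun a ha => by simpa using ⟨a, ha, rfl⟩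
    _ = ∑ i ∈ S.image pA, #{a | pA a = i} := (sum_card_fiberwise_eq_card_filter _ _ _).symm
    _ ≤ ∑ j ∈ {j | ∃ i ∈ S.image pA, R i j}, #{b | pB b = j} := hall _
    _ = #{b | ∃ a ∈ S, R (pA a) (pB b)} := by
      rw [sum_card_fiberwise_eq_card_filter]
      congr 1
      ext b
      simp

theorem fiberDensity_le_fiberDensity_of_biregular {α β ι κ : Type*} [Fintype α] [Fintype β]
    [DecidableEq ι] [DecidableEq κ]
    (E : α → β → Prop) (pA : α → ι) (pB : β → κ)
    (hregA : ∀ (i : ι) (j : κ) (a a' : α), pA a = i → pA a' = i →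
      #{b | pB b = j ∧ E a b} = #{b | pB b = j ∧ E a' b})
    (hregB : ∀ (i : ι) (j : κ) (b b' : β), pB b = j → pB b' = j →
      #{a | pA a = i ∧ E a b} = #{a | pA a = i ∧ E a b'})
    (S : Finset α) {a : α} {b : β} (hab : ∃ a' b', pA a' = pA a ∧ pB b' = pB b ∧ E a' b') :
    fiberDensity pA S a ≤ fiberDensity pB {b | ∃ a ∈ S, E a b} b := by
  obtain ⟨a', b', ha', hb', hE⟩ := hab
  have key : #{y ∈ S | pA y = pA a} * #{z | pB z = pB b} ≤
      #{z ∈ {z | ∃ y ∈ S, E y z} | pB z = pB b} * #{y | pA y = pA a} := by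
    refine card_mul_card_le_card_mul_card_of_biregular E (dA := #{z | pB z = pB b ∧ E a' z})
      (dB := #{y | pA y = pA a ∧ E y b'}) (fun y hy => ?_) (fun z hz => ?_)
      (card_pos.mpr ⟨a', by simp [ha', hE]⟩) (filter_subset_filter _ (subset_univ S))
      (filter_subset_filter _ (subset_univ _)) (fun y hy z hz hyz => ?_)
    · rw [bipartiteAbove, filter_filter]
      exact hregA _ _ y a' (mem_filter.mp hy).2 ha'
    · rw [bipartiteBelow, filter_filter]
      exact hregB _ _ z b' (mem_filter.mp hz).2 hb'
    · simp only [mem_filter, mem_univ, true_and] at hy hz ⊢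
      exact ⟨⟨y, hy.1, hyz⟩, hz⟩
  unfold fiberDensity
  rw [div_le_div_iff₀ (by exact_mod_cast card_pos.mpr ⟨a, by simp⟩)
    (by exact_mod_cast card_pos.mpr ⟨b, by simp⟩)]
  exact_mod_cast key

/-- Hall-type condition on the reduced auxiliary graph `H'` implies a matching of `G`
saturating `A`.  Parts are the fibers of `pA : α → Fin k` and `pB : β → Fin l`, and within
each pair of parts the graph is biregular. -/
theorem stmt_5 (α β : Type) [Fintype α] [Fintype β] (k l : ℕ)
    (E : α → β → Prop) (pA : α → Fin k) (pB : β → Fin l)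
    (hregA : ∀ (i : Fin k) (j : Fin l) (a a' : α), pA a = i → pA a' = i →
      (Finset.univ.filter (fun b => pB b = j ∧ E a b)).card =
        (Finset.univ.filter (fun b => pB b = j ∧ E a' b)).card)
    (hregB : ∀ (i : Fin k) (j : Fin l) (b b' : β), pB b = j → pB b' = j →
      (Finset.univ.filter (fun a => pA a = i ∧ E a b)).card =
        (Finset.univ.filter (fun a => pA a = i ∧ E a b')).card)
    (hhall : ∀ X : Finset (Fin k),
      ∑ i ∈ X, (Finset.univ.filter (fun a : α => pA a = i)).card ≤
        ∑ j ∈ Finset.univ.filter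
            (fun j : Fin l => ∃ i ∈ X, ∃ a b, pA a = i ∧ pB b = j ∧ E a b),
          (Finset.univ.filter (fun b : β => pB b = j)).card) :
    ∃ f : α → β, Function.Injective f ∧ ∀ a, E a (f a) := by
  obtain ⟨f, hf, hadj⟩ := exists_injective_of_sum_card_fiber_le pA pB
    (fun i j => ∃ a b, pA a = i ∧ pB b = j ∧ E a b) fun X => by convert hhall X
  refine (Fintype.all_card_le_filter_rel_iff_exists_injective E).mp fun S => ?_
  have hcast : (#S : ℚ) ≤ #{b | ∃ a ∈ S, E a b} :=
    calc (#S : ℚ) = ∑ a, fiberDensity pA S a := (sum_fiberDensity pA S).symm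
      _ ≤ ∑ a, fiberDensity pB {b | ∃ a ∈ S, E a b} (f a) :=
        sum_le_sum fun a _ =>
          fiberDensity_le_fiberDensity_of_biregular E pA pB hregA hregB S (hadj a)
      _ ≤ ∑ b, fiberDensity pB {b | ∃ a ∈ S, E a b} b := by
        rw [← sum_image fun a _ b _ h => hf h]
        exact sum_le_sum_of_subset_of_nonneg (subset_univ _)
          fun b _ _ => fiberDensity_nonneg pB _ b
      _ = #{b | ∃ a ∈ S, E a b} := sum_fiberDensity pB _
  exact_mod_cast hcast
end

section
/- For integers m ≥ r+1 ≥ 2, let G be the bipartite graph whose two parts A and B each consist of all nonempty subsets of [m] of size at most r, where S ∈ A is adjacent to T ∈ B iff S ∩ T = ∅ and |S| + |T| ≥ r+1. Then G has a perfect matching. -/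
/-!
By Hall's theorem it suffices to find a fractional perfect matching: nonnegative weights on the
edges all of whose row and column sums are `1`. We take weights depending only on the sizes
`k = |S|` and `j = |T|`. Between the levels `k` and `j` (with `k + j ≤ m`) the graph is biregular,
every `S` having `C(m - k, j)` neighbours of size `j`, so it is enough to find a transport plan
`t k j ≥ 0` from the level sizes `C(m, k)`, `1 ≤ k ≤ r`, to themselves that vanishes unless
`r < k + j ≤ m`, and to give each edge between the levels `k` and `j` the weight
`t k j / (C(m, k) C(m - k, j))`. Since `C(m, k) C(m - k, j)` is symmetric in `k` and `j`, a
symmetric plan makes the column sums equal to the row sums.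

Lay the levels `1, …, r` out as consecutive blocks of `[0, N)`, `N = ∑_{1 ≤ i ≤ r} C(m, i)`, and
let `t k j` count the points `x` of block `k` whose mirror image `N - 1 - x` lies in block `j`.
With `P k = ∑_{1 ≤ i ≤ k} C(m, i)`, the support condition reduces to `P k + P j ≤ P r` for
`k + j ≤ r` and `P r ≤ P (k - 1) + P (j - 1)` for `k + j > m`; both follow by reflecting indices
(`i ↦ r + 1 - i`, resp. `i ↦ m - i`) and the unimodality of binomial coefficients.
-/

open Finset

namespace Nat

theorem choose_le_choose_of_le_of_two_mul_le {n a b : ℕ} (hab : a ≤ b) (hb : 2 * b ≤ n) :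
    n.choose a ≤ n.choose b := by
  induction b, hab using Nat.le_induction with
  | base => rfl
  | succ b hab ih => exact (ih (by omega)).trans (choose_le_succ_of_lt_half_left (by omega))

theorem choose_le_choose_of_le_of_add_le {n a b : ℕ} (hab : a ≤ b) (h : a + b ≤ n) :
    n.choose a ≤ n.choose b := by
  rcases le_total (2 * b) n with hb | hb
  · exact choose_le_choose_of_le_of_two_mul_le hab hb
  · rw [← choose_symm (show b ≤ n by omega)]
    exact choose_le_choose_of_le_of_two_mul_le (by omega) (by omega)

theorem choose_mul_choose_sub_comm (n a b : ℕ) :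
    n.choose a * (n - a).choose b = n.choose b * (n - b).choose a := by
  rcases le_or_gt (a + b) n with h | h
  · have ha := choose_mul (n := n) (k := a + b) (s := a) (by omega)
    have hb := choose_mul (n := n) (k := a + b) (s := b) (by omega)
    rw [Nat.add_sub_cancel_left] at ha
    rw [Nat.add_sub_cancel] at hb
    rw [← ha, ← hb, choose_symm_add]
  · have vanish : ∀ c d, n < c + d → n.choose c * (n - c).choose d = 0 := fun c d hcd => by
      rcases le_or_gt c n with hc | hc
      · rw [choose_eq_zero_of_lt (show n - c < d by omega), mul_zero]
      · rw [choose_eq_zero_of_lt hc, zero_mul]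
    rw [vanish a b h, vanish b a (by omega)]

end Nat

namespace Finset

lemma sum_comp_le_sum_of_injOn {ι κ : Type*} [DecidableEq κ] {s : Finset ι} {t : Finset κ}
    (f : κ → ℕ) {e : ι → κ} (he : Set.InjOn e s) (hst : ∀ i ∈ s, e i ∈ t) :
    ∑ i ∈ s, f (e i) ≤ ∑ i ∈ t, f i := by
  rw [← sum_image he]
  exact sum_le_sum_of_subset (image_subset_iff.mpr hst)

end Finset

theorem exists_injective_of_fractional_matching {α β : Type*} [Fintype α] [Fintype β]
    (r : α → β → Prop) [DecidableRel r] (w : α → β → ℚ) (hw : ∀ a b, 0 ≤ w a b)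
    (hr : ∀ a b, w a b ≠ 0 → r a b) (hrow : ∀ a, ∑ b, w a b = 1) (hcol : ∀ b, ∑ a, w a b ≤ 1) :
    ∃ f : α → β, Function.Injective f ∧ ∀ a, r a (f a) := by
  refine (Fintype.all_card_le_filter_rel_iff_exists_injective r).mp fun A => ?_
  set B : Finset β := {b | ∃ a ∈ A, r a b}
  have hB : ∀ a ∈ A, ∀ b ∉ B, w a b = 0 := fun a ha b hb =>
    by_contra fun h => hb (mem_filter.mpr ⟨mem_univ b, a, ha, hr a b h⟩)
  have : (#A : ℚ) ≤ #B := calc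
    (#A : ℚ) = ∑ a ∈ A, ∑ b, w a b := by simp [hrow]
    _ = ∑ a ∈ A, ∑ b ∈ B, w a b :=
      sum_congr rfl fun a ha => (sum_subset (subset_univ B) fun b _ hb => hB a ha b hb).symm
    _ = ∑ b ∈ B, ∑ a ∈ A, w a b := sum_comm
    _ ≤ ∑ b ∈ B, ∑ a, w a b :=
      sum_le_sum fun b _ => sum_le_sum_of_subset_of_nonneg (subset_univ A) fun a _ _ => hw a b
    _ ≤ #B := by simpa using sum_le_sum fun b (_ : b ∈ B) => hcol b
  exact_mod_cast this

def cumSum (a : ℕ → ℕ) (k : ℕ) : ℕ := ∑ i ∈ Ioc 0 k, a i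

def cumSumBlock (a : ℕ → ℕ) (k : ℕ) : Finset ℕ := Ico (cumSum a (k - 1)) (cumSum a k)

def mirrorCoupling (a : ℕ → ℕ) (n k j : ℕ) : ℕ :=
  #{x ∈ range (cumSum a n) | x ∈ cumSumBlock a k ∧ cumSum a n - 1 - x ∈ cumSumBlock a j}

section Coupling

variable (a : ℕ → ℕ)

@[simp] lemma cumSum_zero : cumSum a 0 = 0 := rfl

lemma cumSum_mono : Monotone (cumSum a) := fun _ _ h =>
  sum_le_sum_of_subset (Ioc_subset_Ioc_right h)

lemma cumSum_add_sum_Ioc {k n : ℕ} (h : k ≤ n) :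
    cumSum a k + ∑ i ∈ Ioc k n, a i = cumSum a n :=
  sum_Ioc_consecutive a (Nat.zero_le k) h

lemma cumSum_succ (k : ℕ) : cumSum a (k + 1) = cumSum a k + a (k + 1) :=
  sum_Ioc_succ_top (Nat.zero_le k) a

lemma card_cumSumBlock {k : ℕ} (hk : 0 < k) : #(cumSumBlock a k) = a k := by
  obtain ⟨k, rfl⟩ := Nat.exists_eq_add_of_lt hk
  simp [cumSumBlock, cumSum_succ]

lemma sum_card_filter_mem_cumSumBlock (s : Finset ℕ) (g : ℕ → ℕ) (n : ℕ) :
    ∑ j ∈ Ioc 0 n, #{x ∈ s | g x ∈ cumSumBlock a j} = #{x ∈ s | g x < cumSum a n} := by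
  induction n with
  | zero => simp
  | succ n ih =>
    rw [sum_Ioc_succ_top (Nat.zero_le n), ih,
      ← card_filter_add_card_filter_not (s := {x ∈ s | g x < cumSum a (n + 1)})
        (fun x => g x < cumSum a n), filter_filter, filter_filter]
    have hmono := cumSum_mono a (show n ≤ n + 1 by omega)
    congr 2 <;> refine filter_congr fun x _ => ?_
    · omega
    · rw [cumSumBlock, mem_Ico, Nat.add_sub_cancel]
      omega

lemma mirrorCoupling_comm (n k j : ℕ) : mirrorCoupling a n k j = mirrorCoupling a n j k := by
  apply card_nbij' (fun x => cumSum a n - 1 - x) (fun x => cumSum a n - 1 - x) <;>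
    intro x hx <;>
    simp only [coe_filter, mem_range, Set.mem_ofPred_eq, cumSumBlock, mem_Ico] at hx ⊢ <;> omega

lemma sum_mirrorCoupling {n k : ℕ} (hk : 0 < k) (hkn : k ≤ n) :
    ∑ j ∈ Ioc 0 n, mirrorCoupling a n k j = a k := by
  simp only [mirrorCoupling, ← filter_filter]
  rw [sum_card_filter_mem_cumSumBlock, filter_true_of_mem fun x hx => by
    simp only [mem_filter, mem_range] at hx; omega, filter_mem_eq_inter,
    inter_eq_right.mpr, card_cumSumBlock a hk]
  intro x hx
  simp only [cumSumBlock, mem_Ico, mem_range] at hx ⊢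
  exact hx.2.trans_le (cumSum_mono a hkn)

lemma mirrorCoupling_eq_zero_of_add_le {n k j : ℕ} (h : cumSum a k + cumSum a j ≤ cumSum a n) :
    mirrorCoupling a n k j = 0 := by
  simp only [mirrorCoupling, card_eq_zero, filter_eq_empty_iff, cumSumBlock, mem_Ico, mem_range]
  omega

lemma mirrorCoupling_eq_zero_of_le_add {n k j : ℕ}
    (h : cumSum a n ≤ cumSum a (k - 1) + cumSum a (j - 1)) : mirrorCoupling a n k j = 0 := by
  simp only [mirrorCoupling, card_eq_zero, filter_eq_empty_iff, cumSumBlock, mem_Ico, mem_range]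
  omega

lemma mirrorCoupling_zero_right (n k : ℕ) : mirrorCoupling a n k 0 = 0 := by
  simp [mirrorCoupling, cumSumBlock]

lemma mirrorCoupling_eq_zero_of_lt_right {n k j : ℕ} (h : n < j) : mirrorCoupling a n k j = 0 :=
  mirrorCoupling_eq_zero_of_le_add a (le_add_left (cumSum_mono a (by omega)))

end Coupling

section Binomial

variable {m r k j : ℕ}

lemma cumSum_choose_add_le_of_le (hkj : k ≤ j) (h : k + j ≤ r) (hrm : r < m) :
    cumSum m.choose k + cumSum m.choose j ≤ cumSum m.choose r := by
  have reflect : cumSum m.choose k ≤ ∑ i ∈ Ioc j r, m.choose i := calc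
    cumSum m.choose k ≤ ∑ i ∈ Ioc 0 k, m.choose (r + 1 - i) := sum_le_sum fun i hi => by
        rw [mem_Ioc] at hi
        exact Nat.choose_le_choose_of_le_of_add_le (by omega) (by omega)
    _ ≤ ∑ i ∈ Ioc j r, m.choose i :=
        sum_comp_le_sum_of_injOn _ (fun i hi i' hi' _ => by simp_all; omega) fun i hi => by
          simp only [mem_Ioc] at hi ⊢; omega
  rw [← cumSum_add_sum_Ioc _ (show j ≤ r by omega)]
  omega

lemma cumSum_choose_add_le (h : k + j ≤ r) (hrm : r < m) :
    cumSum m.choose k + cumSum m.choose j ≤ cumSum m.choose r := by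
  rcases le_total k j with hkj | hjk
  · exact cumSum_choose_add_le_of_le hkj h hrm
  · rw [add_comm]
    exact cumSum_choose_add_le_of_le hjk (by omega) hrm

lemma cumSum_choose_le_add (hrm : r < m) (h : m < k + j) :
    cumSum m.choose r ≤ cumSum m.choose (k - 1) + cumSum m.choose (j - 1) := by
  rcases le_total r (k - 1) with hk | hk
  · exact le_add_right (cumSum_mono _ hk)
  have reflect : ∑ i ∈ Ioc (k - 1) r, m.choose i ≤ cumSum m.choose (j - 1) := calc
    ∑ i ∈ Ioc (k - 1) r, m.choose i = ∑ i ∈ Ioc (k - 1) r, m.choose (m - i) :=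
        sum_congr rfl fun i hi => (Nat.choose_symm (by simp only [mem_Ioc] at hi; omega)).symm
    _ ≤ cumSum m.choose (j - 1) :=
        sum_comp_le_sum_of_injOn _ (fun i hi i' hi' _ => by simp_all; omega) fun i hi => by
          simp only [mem_Ioc] at hi ⊢; omega
  rw [← cumSum_add_sum_Ioc _ hk]
  omega

lemma add_mem_Ioc_of_mirrorCoupling_choose_ne_zero (hrm : r < m)
    (h : mirrorCoupling m.choose r k j ≠ 0) : k + j ∈ Ioc r m :=
  mem_Ioc.mpr
    ⟨not_le.mp fun hle => h (mirrorCoupling_eq_zero_of_add_le _ (cumSum_choose_add_le hle hrm)),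
      not_lt.mp fun hlt => h (mirrorCoupling_eq_zero_of_le_add _ (cumSum_choose_le_add hrm hlt))⟩

end Binomial

noncomputable def matchingWeight (m r : ℕ) (S T : Finset (Fin m)) : ℚ :=
  if Disjoint S T then
    (mirrorCoupling m.choose r #S #T : ℚ) / (m.choose #S * (m - #S).choose #T)
  else 0

section Weight

variable {m r : ℕ}

lemma matchingWeight_nonneg (S T : Finset (Fin m)) : 0 ≤ matchingWeight m r S T := by
  unfold matchingWeight
  split_ifs <;> positivity

lemma matchingWeight_comm (S T : Finset (Fin m)) :
    matchingWeight m r S T = matchingWeight m r T S := by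
  simp only [matchingWeight, disjoint_comm (a := S), mirrorCoupling_comm _ _ #S, ← Nat.cast_mul,
    Nat.choose_mul_choose_sub_comm m #S]

lemma edge_of_matchingWeight_ne_zero (hrm : r < m) {S T : Finset (Fin m)}
    (h : matchingWeight m r S T ≠ 0) : Disjoint S T ∧ r < #S + #T ∧ T.Nonempty ∧ #T ≤ r := by
  unfold matchingWeight at h
  split_ifs at h with hST
  · have hc : mirrorCoupling m.choose r #S #T ≠ 0 := fun h0 => h (by simp [h0])
    refine ⟨hST, (mem_Ioc.mp (add_mem_Ioc_of_mirrorCoupling_choose_ne_zero hrm hc)).1, ?_, ?_⟩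
    · exact card_pos.mp (Nat.pos_of_ne_zero fun h0 => hc (by rw [h0, mirrorCoupling_zero_right]))
    · exact not_lt.mp fun hlt => hc (mirrorCoupling_eq_zero_of_lt_right _ hlt)
  · exact absurd rfl h

lemma sum_matchingWeight (hrm : r < m) {S : Finset (Fin m)} (hS : S.Nonempty) (hSr : #S ≤ r) :
    ∑ T, matchingWeight m r S T = 1 := by
  have hchoose : (m.choose #S : ℚ) ≠ 0 := mod_cast (Nat.choose_pos (by omega)).ne'
  calc ∑ T, matchingWeight m r S T
      = ∑ T ∈ Sᶜ.powerset,
          (mirrorCoupling m.choose r #S #T : ℚ) / (m.choose #S * (m - #S).choose #T) := by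
        simp only [matchingWeight, ← sum_filter]
        congr 1
        ext T
        simp [subset_compl_iff_disjoint_left]
    _ = ∑ j ∈ range (m - #S + 1), (mirrorCoupling m.choose r #S j : ℚ) / m.choose #S := by
        rw [sum_powerset_apply_card fun j =>
            (mirrorCoupling m.choose r #S j : ℚ) / (m.choose #S * (m - #S).choose j),
          card_compl, Fintype.card_fin]
        refine sum_congr rfl fun j hj => ?_
        have : ((m - #S).choose j : ℚ) ≠ 0 :=
          mod_cast (Nat.choose_pos (by simp only [mem_range] at hj; omega)).ne'
        rw [nsmul_eq_mul]
        field_simp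
    _ = (∑ j ∈ Ioc 0 r, mirrorCoupling m.choose r #S j : ℕ) / m.choose #S := by
        rw [← sum_div, Nat.cast_sum]
        congr 1
        refine sum_congr_of_eq_on_inter (fun j hj hj' => ?_) (fun j hj hj' => ?_) fun _ _ _ => rfl
        · rw [Nat.cast_eq_zero]
          rcases Nat.eq_zero_or_pos j with rfl | hj0
          · exact mirrorCoupling_zero_right _ _ _
          · exact mirrorCoupling_eq_zero_of_lt_right _ (by rw [mem_Ioc] at hj'; omega)
        · rw [Nat.cast_eq_zero]
          by_contra hc
          have := add_mem_Ioc_of_mirrorCoupling_choose_ne_zero hrm hc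
          rw [mem_range] at hj'
          rw [mem_Ioc] at this
          omega
    _ = 1 := by rw [sum_mirrorCoupling _ (card_pos.mpr hS) hSr, div_self hchoose]

lemma sum_subtype_matchingWeight (hrm : r < m) (S : Finset (Fin m)) :
    ∑ T : {T : Finset (Fin m) // T.Nonempty ∧ #T ≤ r}, matchingWeight m r S T =
      ∑ T, matchingWeight m r S T := by
  rw [← sum_subtype {T | T.Nonempty ∧ #T ≤ r} (by simp),
    sum_filter_of_ne fun T _ h => (edge_of_matchingWeight_ne_zero hrm h).2.2]

end Weight

theorem stmt_8_general (m r : ℕ) (hm : r + 1 ≤ m) :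
    ∃ f : {S : Finset (Fin m) // S.Nonempty ∧ S.card ≤ r} ≃
          {S : Finset (Fin m) // S.Nonempty ∧ S.card ≤ r},
      ∀ S, Disjoint S.1 (f S).1 ∧ r + 1 ≤ S.1.card + (f S).1.card := by
  have hrow : ∀ S : {S : Finset (Fin m) // S.Nonempty ∧ S.card ≤ r},
      ∑ T : {T : Finset (Fin m) // T.Nonempty ∧ T.card ≤ r}, matchingWeight m r S T = 1 :=
    fun S => by rw [sum_subtype_matchingWeight hm, sum_matchingWeight hm S.2.1 S.2.2]
  obtain ⟨f, hf, hadj⟩ := exists_injective_of_fractional_matching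
    (fun S T : {S : Finset (Fin m) // S.Nonempty ∧ S.card ≤ r} =>
      Disjoint S.1 T.1 ∧ r + 1 ≤ S.1.card + T.1.card)
    (fun S T => matchingWeight m r S T) (fun _ _ => matchingWeight_nonneg _ _)
    (fun _ _ h => (edge_of_matchingWeight_ne_zero hm h).imp_right And.left) hrow
    fun T => by simpa only [matchingWeight_comm _ T.1] using (hrow T).le
  exact ⟨Equiv.ofBijective f (Finite.injective_iff_bijective.mp hf), hadj⟩

theorem stmt_8 (m r : ℕ) (hr : 1 ≤ r) (hm : r + 1 ≤ m) :
    ∃ f : {S : Finset (Fin m) // S.Nonempty ∧ S.card ≤ r} ≃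
          {S : Finset (Fin m) // S.Nonempty ∧ S.card ≤ r},
      ∀ S, Disjoint S.1 (f S).1 ∧ r + 1 ≤ S.1.card + (f S).1.card :=
  stmt_8_general m r hm
end

section
/- For integers r+1 ≤ m ≤ 2r-1 and m-r ≤ s ≤ t ≤ r, ∑_{j=r+1-t}^{m-s} C(m,j) ≥ ∑_{i=s}^{t} C(m,i). -/
open Finset

theorem Nat.sum_choose_Icc_eq_sum_choose_Icc_sub {m s t : ℕ} (hs : s ≤ m) (ht : t ≤ m) :
    ∑ i ∈ Icc s t, m.choose i = ∑ j ∈ Icc (m - t) (m - s), m.choose j := by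
  refine sum_nbij' (m - ·) (m - ·) ?_ ?_ ?_ ?_ ?_ <;> simp only [mem_Icc]
  · intro i hi; omega
  · intro j hj; omega
  · intro i hi; omega
  · intro j hj; omega
  · intro i hi; exact (Nat.choose_symm (hi.2.trans ht)).symm

theorem stmt_10_general (m r s t : ℕ) (hm1 : r + 1 ≤ m)
    (hst : s ≤ t) (htr : t ≤ r) :
    ∑ i ∈ Finset.Icc s t, m.choose i ≤ ∑ j ∈ Finset.Icc (r + 1 - t) (m - s), m.choose j := by
  rw [Nat.sum_choose_Icc_eq_sum_choose_Icc_sub (by omega) (by omega)]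
  exact sum_le_sum_of_subset (Icc_subset_Icc_left (by omega))

theorem stmt_10 (m r s t : ℕ) (hm1 : r + 1 ≤ m) (hm2 : m ≤ 2 * r - 1)
    (hs : m - r ≤ s) (hst : s ≤ t) (htr : t ≤ r) :
    ∑ i ∈ Finset.Icc s t, m.choose i ≤ ∑ j ∈ Finset.Icc (r + 1 - t) (m - s), m.choose j :=
  stmt_10_general m r s t hm1 hst htr
end

section
/- Let 1 ≤ k ≤ n-1 and let F be a family of nonempty subsets of [n], each of size at most k, such that for every A, B ∈ F with A ∩ B = ∅ one has |A| + |B| ≤ k. Then |F| ≤ C(n-1,k-1) + C(n-1,k-2) + ... + C(n-1,0). -/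
/-!
Transport `F` to `range n` and generalise: if the members of `F ⊆ 𝒫(range (m + 1))` have sizes in
`[t + 1, k - t]` and disjoint members have total size at most `k ≤ m`, then
`#F ≤ ∑_{t ≤ j < k - t} C(m, j)`. Induct on `m`. For `m = k`, `F` never contains a set together
with its complement, so choosing whichever of `A`, `range (k + 1) \ A` contains `0` is injective.
For `m > k`, first make `F` shifted by `{i}, {j}`-compressions, then split it at the top element:
the members avoiding it, together with most of its link, satisfy the hypotheses on `range m` with
the same `(k, t)`, while in the rest of the link disjoint pairs lose two more elements, giving
`(k - 2, t - 1)`; Pascal's rule adds the two bounds. The exceptional case `t = 0` with the top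
singleton in `F` forces every singleton into `F` and reduces to `t = 1`.
-/

open Finset UV
open scoped FinsetFamily

namespace NonuniformEKR

def DisjointSumLE {α : Type*} (k : ℕ) (F : Finset (Finset α)) : Prop :=
  ∀ A ∈ F, ∀ B ∈ F, Disjoint A B → #A + #B ≤ k

section Compression

variable {α : Type*} [DecidableEq α] {i j : α} {A : Finset α} {F : Finset (Finset α)}

lemma compress_singleton_of_notMem_of_mem (hi : i ∉ A) (hj : j ∈ A) :
    compress {i} {j} A = insert i (A.erase j) := by
  rw [compress_of_disjoint_of_le (by simpa using hi) (by simpa using hj)]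
  ext x
  simp only [sup_eq_union, mem_sdiff, mem_union, mem_singleton, mem_insert, mem_erase]
  grind

lemma compress_singleton_of_mem_or_notMem (h : i ∈ A ∨ j ∉ A) : compress {i} {j} A = A := by
  rw [compress, if_neg]
  simpa only [disjoint_singleton_left, singleton_subset_iff, not_and_or, not_not] using h

lemma exists_eq_insert_erase_of_mem_compression (h : A ∈ 𝓒 {i} {j} F) (hA : A ∉ F) :
    ∃ B ∈ F, i ∉ B ∧ j ∈ B ∧ A = insert i (B.erase j) := by
  obtain ⟨-, B, hB, rfl⟩ := (mem_compression.1 h).resolve_left (fun h' => hA h'.1)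
  by_cases hij : i ∉ B ∧ j ∈ B
  · exact ⟨B, hB, hij.1, hij.2, compress_singleton_of_notMem_of_mem hij.1 hij.2⟩
  · rw [compress_singleton_of_mem_or_notMem (by tauto)] at hA
    exact absurd hB hA

lemma card_insert_erase_of_notMem_of_mem (hi : i ∉ A) (hj : j ∈ A) :
    #(insert i (A.erase j)) = #A := by
  rw [card_insert_of_notMem (fun h => hi (mem_of_mem_erase h)), card_erase_add_one hj]

/-- A disjoint pair of the compressed family is matched by a disjoint pair of `F` of the same
sizes. -/
lemma DisjointSumLE.compression {k : ℕ} (hF : DisjointSumLE k F) :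
    DisjointSumLE k (𝓒 {i} {j} F) := by
  have moved : ∀ A ∈ 𝓒 {i} {j} F, A ∈ F → ∀ Q ∈ 𝓒 {i} {j} F, Q ∉ F → Disjoint A Q →
      #A + #Q ≤ k := by
    intro A hAc hA Q hQc hQ hAQ
    obtain ⟨B, hB, hiB, hjB, rfl⟩ := exists_eq_insert_erase_of_mem_compression hQc hQ
    rw [card_insert_erase_of_notMem_of_mem hiB hjB]
    have hiA : i ∉ A := disjoint_right.1 hAQ (mem_insert_self _ _)
    by_cases hjA : j ∈ A
    · have hA' : insert i (A.erase j) ∈ F := by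
        obtain h | h := mem_compression.1 hAc
        · rw [← compress_singleton_of_notMem_of_mem hiA hjA]; exact h.2
        · exact absurd hA h.1
      have := hF _ hA' B hB ?_
      · rwa [card_insert_erase_of_notMem_of_mem hiA hjA] at this
      rw [disjoint_left] at hAQ ⊢
      simp only [mem_insert, mem_erase] at hAQ ⊢
      grind
    · refine hF A hA B hB ?_
      rw [disjoint_left] at hAQ ⊢
      simp only [mem_insert, mem_erase] at hAQ
      grind
  intro A hA B hB hAB
  by_cases hAF : A ∈ F <;> by_cases hBF : B ∈ F
  · exact hF A hAF B hBF hAB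
  · exact moved A hA hAF B hB hBF hAB
  · linarith [moved B hB hBF A hA hAF hAB.symm]
  · obtain ⟨A', -, -, -, rfl⟩ := exists_eq_insert_erase_of_mem_compression hA hAF
    obtain ⟨B', -, -, -, rfl⟩ := exists_eq_insert_erase_of_mem_compression hB hBF
    exact absurd hAB (not_disjoint_iff.2 ⟨i, mem_insert_self _ _, mem_insert_self _ _⟩)

end Compression

def Shifted (F : Finset (Finset ℕ)) : Prop :=
  ∀ A ∈ F, ∀ i j, i < j → j ∈ A → i ∉ A → insert i (A.erase j) ∈ F

structure Admissible (n k t : ℕ) (F : Finset (Finset ℕ)) : Prop where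
  subset_range : ∀ A ∈ F, A ⊆ range n
  lt_card : ∀ A ∈ F, t < #A
  card_add_le : ∀ A ∈ F, #A + t ≤ k
  disjointSumLE : DisjointSumLE k F

section Shifting

variable {n k t i j : ℕ} {A : Finset ℕ} {F : Finset (Finset ℕ)}

lemma Admissible.compression (hF : Admissible n k t F) (hij : i < j) :
    Admissible n k t (𝓒 {i} {j} F) := by
  have key : ∀ A ∈ 𝓒 {i} {j} F, ∃ B ∈ F, #A = #B ∧ A ⊆ range n := by
    intro A hA
    by_cases hAF : A ∈ F
    · exact ⟨A, hAF, rfl, hF.subset_range A hAF⟩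
    obtain ⟨B, hB, hiB, hjB, rfl⟩ := exists_eq_insert_erase_of_mem_compression hA hAF
    refine ⟨B, hB, card_insert_erase_of_notMem_of_mem hiB hjB, insert_subset ?_ ?_⟩
    · exact mem_range.2 (hij.trans (mem_range.1 (hF.subset_range B hB hjB)))
    · exact (erase_subset _ _).trans (hF.subset_range B hB)
  refine ⟨fun A hA => ?_, fun A hA => ?_, fun A hA => ?_, hF.disjointSumLE.compression⟩
  all_goals obtain ⟨B, hB, hAB, hA⟩ := key A hA
  · exact hA
  · exact hAB ▸ hF.lt_card B hB
  · exact hAB ▸ hF.card_add_le B hB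

def weight (F : Finset (Finset ℕ)) : ℕ := ∑ A ∈ F, ∑ x ∈ A, x

lemma sum_insert_erase_add (hi : i ∉ A) (hj : j ∈ A) :
    ∑ x ∈ insert i (A.erase j), x + j = ∑ x ∈ A, x + i := by
  rw [sum_insert (fun h => hi (mem_of_mem_erase h)), ← sum_erase_add A _ hj]
  ring

lemma weight_compression_lt (hij : i < j) (hA : A ∈ F) (hiA : i ∉ A) (hjA : j ∈ A)
    (hA' : insert i (A.erase j) ∉ F) : weight (𝓒 {i} {j} F) < weight F := by
  set moved := F.filter (fun B => compress {i} {j} B ∉ F)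
  have hmoved : moved.Nonempty :=
    ⟨A, mem_filter.2 ⟨hA, by rwa [compress_singleton_of_notMem_of_mem hiA hjA]⟩⟩
  rw [weight, weight, compression, sum_union compress_disjoint]
  conv_rhs => rw [← filter_union_filter_not_eq (fun B => compress {i} {j} B ∈ F) F]
  rw [sum_union (disjoint_filter_filter_not _ _ _), add_lt_add_iff_left, filter_image,
    sum_image compress_injOn]
  refine sum_lt_sum_of_nonempty hmoved fun B hB => ?_
  obtain ⟨hB, hB'⟩ := mem_filter.1 hB
  have hiB : i ∉ B ∧ j ∈ B := by
    by_contra h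
    rw [compress_singleton_of_mem_or_notMem (by tauto)] at hB'
    exact hB' hB
  rw [compress_singleton_of_notMem_of_mem hiB.1 hiB.2]
  linarith [sum_insert_erase_add hiB.1 hiB.2]

theorem Admissible.exists_shifted {n k t : ℕ} {F : Finset (Finset ℕ)} (hF : Admissible n k t F) :
    ∃ G, #G = #F ∧ Admissible n k t G ∧ Shifted G := by
  by_cases hsh : Shifted F
  · exact ⟨F, rfl, hF, hsh⟩
  simp only [Shifted, not_forall] at hsh
  obtain ⟨A, hA, i, j, hij, hjA, hiA, hA'⟩ := hsh
  have := weight_compression_lt hij hA hiA hjA hA'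
  obtain ⟨G, hGcard, hG, hGsh⟩ := (hF.compression hij).exists_shifted
  exact ⟨G, hGcard.trans (card_compression _ _ _), hG, hGsh⟩
termination_by weight F

lemma Shifted.singleton_mem (hsh : Shifted F) {a x : ℕ} (ha : {a} ∈ F) (hx : x ≤ a) :
    {x} ∈ F := by
  rcases hx.eq_or_lt with rfl | hx
  · exact ha
  · simpa using hsh _ ha x a hx (mem_singleton_self a) (by simpa using hx.ne)

lemma Shifted.filter_card (hsh : Shifted F) (p : ℕ → Prop) [DecidablePred p] :
    Shifted {A ∈ F | p #A} := by
  intro A hA i j hij hjA hiA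
  obtain ⟨hA, hpA⟩ := mem_filter.1 hA
  exact mem_filter.2 ⟨hsh A hA i j hij hjA hiA,
    (card_insert_erase_of_notMem_of_mem hiA hjA).symm ▸ hpA⟩

end Shifting

lemma sum_Ico_choose_succ (m t b : ℕ) :
    ∑ j ∈ Ico t b, (m + 1).choose j =
      ∑ j ∈ Ico t b, m.choose j + ∑ j ∈ Ico (t - 1) (b - 1), m.choose j := by
  induction b with
  | zero => simp
  | succ b ih =>
    rcases lt_or_ge b t with hbt | htb
    · rw [Ico_eq_empty_of_le (by omega), Ico_eq_empty_of_le (by omega)]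
      simp
    rw [sum_Ico_succ_top htb, sum_Ico_succ_top htb, ih]
    rcases b with _ | b
    · simp
    · simp only [Nat.add_sub_cancel]
      rw [sum_Ico_succ_top (by omega : t - 1 ≤ b), Nat.choose_succ_succ']
      ring

lemma le_choose_of_pos_of_lt {m r : ℕ} (hr : 0 < r) (hrm : r < m) : m ≤ m.choose r := by
  induction m with
  | zero => omega
  | succ m ih =>
    obtain ⟨q, rfl⟩ := Nat.exists_eq_add_one_of_ne_zero hr.ne'
    rw [Nat.choose_succ_succ']
    rcases lt_or_eq_of_le (Nat.le_of_lt_succ hrm) with h | rfl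
    · linarith [ih h, Nat.choose_pos (show q ≤ m by omega)]
    · simp

lemma card_filter_powerset_card_mem {α : Type*} (V : Finset α) (I : Finset ℕ) :
    #{T ∈ V.powerset | #T ∈ I} = ∑ j ∈ I, (#V).choose j := by
  classical
  rw [card_eq_sum_card_fiberwise (s := {T ∈ V.powerset | #T ∈ I}) (f := card) (t := I)
    (fun T hT => (mem_filter.1 hT).2)]
  refine sum_congr rfl fun j hj => ?_
  rw [← card_powersetCard, powersetCard_eq_filter, filter_filter]
  congr 1
  ext T
  simp only [mem_filter]
  grind

section BaseCase

variable {k t : ℕ} {F : Finset (Finset ℕ)}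

lemma Admissible.range_sdiff_notMem (hF : Admissible (k + 1) k t F) {A : Finset ℕ} (hA : A ∈ F) :
    range (k + 1) \ A ∉ F := by
  intro hA'
  have := hF.disjointSumLE A hA _ hA' disjoint_sdiff
  rw [card_sdiff_of_subset (hF.subset_range A hA), card_range] at this
  have := hF.lt_card A hA
  omega

lemma Admissible.card_le_sum_choose_self (hF : Admissible (k + 1) k t F) :
    #F ≤ ∑ j ∈ Ico t (k - t), k.choose j := by
  set f : Finset ℕ → Finset ℕ := fun A => if 0 ∈ A then A else range (k + 1) \ A
  have hf : ∀ A ∈ F, 0 ∈ f A ∧ f A ⊆ range (k + 1) ∧ t < #(f A) ∧ #(f A) + t ≤ k := by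
    intro A hA
    have := hF.lt_card A hA
    have := hF.card_add_le A hA
    by_cases h0 : 0 ∈ A
    · simp only [f, if_pos h0]
      exact ⟨h0, hF.subset_range A hA, by omega, by omega⟩
    · simp only [f, if_neg h0, mem_sdiff, mem_range, card_sdiff_of_subset (hF.subset_range A hA),
        card_range]
      exact ⟨⟨by omega, h0⟩, sdiff_subset, by omega, by omega⟩
  have hfinj : Set.InjOn f F := by
    intro A hA B hB hAB
    have hcompl := Finset.sdiff_sdiff_eq_self (hF.subset_range A hA)
    have hcompl' := Finset.sdiff_sdiff_eq_self (hF.subset_range B hB)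
    by_cases h0A : 0 ∈ A <;> by_cases h0B : 0 ∈ B <;>
      simp only [f, h0A, h0B, if_true, if_false] at hAB
    · exact hAB
    · exact absurd (hAB ▸ hA) (hF.range_sdiff_notMem hB)
    · exact absurd (hAB ▸ hB) (hF.range_sdiff_notMem hA)
    · rw [← hcompl, hAB, hcompl']
  have hV : #((range (k + 1)).erase 0) = k := by simp
  calc #F = #(F.image fun A => (f A).erase 0) := by
        refine (card_image_of_injOn fun A hA B hB hAB => hfinj hA hB ?_).symm
        simpa [insert_erase (hf A hA).1, insert_erase (hf B hB).1] using
          congrArg (insert 0) hAB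
    _ ≤ #{T ∈ ((range (k + 1)).erase 0).powerset | #T ∈ Ico t (k - t)} := by
        refine card_le_card fun T hT => ?_
        obtain ⟨A, hA, rfl⟩ := mem_image.1 hT
        obtain ⟨h0, hsub, hlt, hle⟩ := hf A hA
        simp only [mem_filter, mem_powerset, mem_Ico, card_erase_of_mem h0]
        exact ⟨erase_subset_erase _ hsub, by omega, by omega⟩
    _ = ∑ j ∈ Ico t (k - t), k.choose j := by rw [card_filter_powerset_card_mem, hV]

end BaseCase

lemma DisjointSumLE.card_add_card_add_one_le {α : Type*} [DecidableEq α] {k : ℕ} {a : α}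
    {F : Finset (Finset α)} {A C : Finset α} (hF : DisjointSumLE k F)
    (hA : A ∈ F.nonMemberSubfamily a) (hC : C ∈ F.memberSubfamily a) (hAC : Disjoint A C) :
    #A + #C + 1 ≤ k := by
  rw [mem_nonMemberSubfamily] at hA
  rw [mem_memberSubfamily] at hC
  have := hF A hA.1 _ hC.1 (disjoint_insert_right.2 ⟨hA.2, hAC⟩)
  rwa [card_insert_of_notMem hC.2, ← add_assoc] at this

/-- Shifting `insert a D` to `insert x D` frees the element `a`, so the pair `insert x D`,
`insert a C` of `F` is disjoint. -/
lemma DisjointSumLE.card_add_card_add_two_le {k a x : ℕ} {F : Finset (Finset ℕ)} {C D : Finset ℕ}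
    (hF : DisjointSumLE k F) (hsh : Shifted F) (hxa : x < a) (hC : C ∈ F.memberSubfamily a)
    (hD : D ∈ F.memberSubfamily a) (hCD : Disjoint C D) (hxC : x ∉ C) (hxD : x ∉ D) :
    #C + #D + 2 ≤ k := by
  rw [mem_memberSubfamily] at hC hD
  have hxD' : insert x D ∈ F := by
    have := hsh _ hD.1 x a hxa (mem_insert_self a D) (by simp [hxa.ne, hxD])
    rwa [erase_insert hD.2] at this
  have := hF _ hC.1 _ hxD' ?_
  · rw [card_insert_of_notMem hC.2, card_insert_of_notMem hxD] at this
    omega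
  rw [disjoint_left] at hCD ⊢
  simp only [mem_insert]
  grind

namespace Split

variable {m k t : ℕ} {F : Finset (Finset ℕ)}

/-- The link members moved into `upper`. `upper` keeps the parameters `(k, t)` on `range (m + 1)`
and `lower` gets `(k - 2, t - 1)`; of two complementary link members only one may move up. -/
def promoted (m t : ℕ) (F : Finset (Finset ℕ)) : Finset (Finset ℕ) :=
  {C ∈ F.memberSubfamily (m + 1) |
    C ∉ F ∧ t < #C ∧ (0 ∈ C ∨ range (m + 1) \ C ∉ F.memberSubfamily (m + 1))}

def upper (m t : ℕ) (F : Finset (Finset ℕ)) : Finset (Finset ℕ) :=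
  F.nonMemberSubfamily (m + 1) ∪ promoted m t F

def lower (m t : ℕ) (F : Finset (Finset ℕ)) : Finset (Finset ℕ) :=
  F.memberSubfamily (m + 1) \ promoted m t F

lemma card_eq_card_upper_add_card_lower : #F = #(upper m t F) + #(lower m t F) := by
  have hsub : promoted m t F ⊆ F.memberSubfamily (m + 1) := filter_subset _ _
  have hdisj : Disjoint (F.nonMemberSubfamily (m + 1)) (promoted m t F) := by
    rw [disjoint_left]
    intro C hC hC'
    exact (mem_filter.1 hC').2.1 (mem_nonMemberSubfamily.1 hC).1
  rw [upper, lower, card_union_of_disjoint hdisj, card_sdiff_of_subset hsub,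
    ← card_memberSubfamily_add_card_nonMemberSubfamily (m + 1) F]
  have := card_le_card hsub
  omega

lemma mem_lower {C : Finset ℕ} : C ∈ lower m t F ↔ C ∈ F.memberSubfamily (m + 1) ∧
    (C ∈ F ∨ #C ≤ t ∨ 0 ∉ C ∧ range (m + 1) \ C ∈ F.memberSubfamily (m + 1)) := by
  simp only [lower, promoted, mem_sdiff, mem_filter, ← not_lt]
  tauto

section

variable (hF : Admissible (m + 2) k t F)
include hF

lemma subset_range_of_mem_memberSubfamily {C : Finset ℕ} (hC : C ∈ F.memberSubfamily (m + 1)) :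
    C ⊆ range (m + 1) := by
  rw [mem_memberSubfamily] at hC
  intro x hx
  have := mem_range.1 (hF.subset_range _ hC.1 (mem_insert_of_mem hx))
  exact mem_range.2 (lt_of_le_of_ne (Nat.le_of_lt_succ this) (fun h => hC.2 (h ▸ hx)))

lemma card_bounds_of_mem_memberSubfamily {C : Finset ℕ} (hC : C ∈ F.memberSubfamily (m + 1)) :
    t ≤ #C ∧ #C + t + 1 ≤ k := by
  rw [mem_memberSubfamily] at hC
  have h1 := hF.lt_card _ hC.1
  have h2 := hF.card_add_le _ hC.1
  rw [card_insert_of_notMem hC.2] at h1 h2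
  omega

lemma subset_range_of_mem_nonMemberSubfamily {A : Finset ℕ}
    (hA : A ∈ F.nonMemberSubfamily (m + 1)) : A ⊆ range (m + 1) := by
  rw [mem_nonMemberSubfamily] at hA
  intro x hx
  have := mem_range.1 (hF.subset_range _ hA.1 hx)
  exact mem_range.2 (lt_of_le_of_ne (Nat.le_of_lt_succ this) (fun h => hA.2 (h ▸ hx)))

lemma card_add_card_add_two_le_or_eq_sdiff (hsh : Shifted F) {C D : Finset ℕ}
    (hC : C ∈ F.memberSubfamily (m + 1)) (hD : D ∈ F.memberSubfamily (m + 1))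
    (hCD : Disjoint C D) : #C + #D + 2 ≤ k ∨ D = range (m + 1) \ C := by
  by_cases hcover : range (m + 1) ⊆ C ∪ D
  · right
    rw [← union_sdiff_cancel_left hCD]
    exact congrArg (· \ C) (subset_antisymm
      (union_subset (subset_range_of_mem_memberSubfamily hF hC)
        (subset_range_of_mem_memberSubfamily hF hD)) hcover)
  · left
    obtain ⟨x, hx, hxCD⟩ := not_subset.1 hcover
    rw [mem_union, not_or] at hxCD
    exact hF.disjointSumLE.card_add_card_add_two_le hsh (mem_range.1 hx) hC hD hCD hxCD.1 hxCD.2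

lemma admissible_upper (hsh : Shifted F) : Admissible (m + 1) k t (upper m t F) := by
  have hprom : ∀ C ∈ promoted m t F, C ∈ F.memberSubfamily (m + 1) ∧ t < #C ∧
      (0 ∈ C ∨ range (m + 1) \ C ∉ F.memberSubfamily (m + 1)) := fun C hC => by
    have := (mem_filter.1 hC)
    exact ⟨this.1, this.2.2⟩
  have hmixed : ∀ A ∈ F.nonMemberSubfamily (m + 1), ∀ C ∈ promoted m t F, Disjoint A C →
      #A + #C ≤ k := fun A hA C hC hAC => by
    linarith [hF.disjointSumLE.card_add_card_add_one_le hA (hprom C hC).1 hAC]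
  refine ⟨fun A hA => ?_, fun A hA => ?_, fun A hA => ?_, fun A hA B hB hAB => ?_⟩
  all_goals rcases mem_union.1 hA with hA | hA
  · exact subset_range_of_mem_nonMemberSubfamily hF hA
  · exact subset_range_of_mem_memberSubfamily hF (hprom A hA).1
  · exact hF.lt_card A (mem_nonMemberSubfamily.1 hA).1
  · exact (hprom A hA).2.1
  · exact hF.card_add_le A (mem_nonMemberSubfamily.1 hA).1
  · linarith [(card_bounds_of_mem_memberSubfamily hF (hprom A hA).1).2]
  all_goals rcases mem_union.1 hB with hB | hB
  · exact hF.disjointSumLE A (mem_nonMemberSubfamily.1 hA).1 B (mem_nonMemberSubfamily.1 hB).1 hAB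
  · exact hmixed A hA B hB hAB
  · linarith [hmixed B hB A hA hAB.symm]
  obtain ⟨hAG, -, hA0⟩ := hprom A hA
  obtain ⟨hBG, -, hB0⟩ := hprom B hB
  refine (card_add_card_add_two_le_or_eq_sdiff hF hsh hAG hBG hAB).elim (by omega) fun hBA => ?_
  have hAB' : A = range (m + 1) \ B := by
    rw [hBA, Finset.sdiff_sdiff_eq_self (subset_range_of_mem_memberSubfamily hF hAG)]
  rw [← hBA] at hA0
  rw [← hAB'] at hB0
  have h0A := hA0.resolve_right (not_not.2 hBG)
  have h0B := hB0.resolve_right (not_not.2 hAG)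
  exact absurd hAB (not_disjoint_iff.2 ⟨0, h0A, h0B⟩)

lemma zero_notMem_of_mem_lower {C D : Finset ℕ} (hk : k ≤ m) (hC : C ∈ lower m t F)
    (hD : D ∈ F.memberSubfamily (m + 1)) (hCD : Disjoint C D) (hcard : #C + #D = m + 1) :
    0 ∉ C := by
  obtain ⟨hCG, hC | hC | hC⟩ := mem_lower.1 hC
  · have := hF.disjointSumLE.card_add_card_add_one_le
      (mem_nonMemberSubfamily.2 ⟨hC, (mem_memberSubfamily.1 hCG).2⟩) hD hCD
    omega
  · linarith [(card_bounds_of_mem_memberSubfamily hF hD).2]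
  · exact hC.1

lemma disjointSumLE_lower (hsh : Shifted F) (hk : k ≤ m) : DisjointSumLE (k - 2) (lower m t F) := by
  intro C hC D hD hCD
  have hCG := (mem_lower.1 hC).1
  have hDG := (mem_lower.1 hD).1
  refine (card_add_card_add_two_le_or_eq_sdiff hF hsh hCG hDG hCD).elim (by omega) fun hDC => ?_
  have hcard : #C + #D = m + 1 := by
    rw [hDC, card_sdiff_of_subset (subset_range_of_mem_memberSubfamily hF hCG), card_range]
    have := card_le_card (subset_range_of_mem_memberSubfamily hF hCG)
    rw [card_range] at this
    omega
  have h0C := zero_notMem_of_mem_lower hF hk hC hDG hCD hcard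
  have h0D := zero_notMem_of_mem_lower hF hk hD hCG hCD.symm (by omega)
  rw [hDC, mem_sdiff, mem_range] at h0D
  exact absurd ⟨Nat.succ_pos m, h0C⟩ h0D

lemma admissible_lower (hsh : Shifted F) (hk : k ≤ m) (ht : 0 < t) :
    Admissible (m + 1) (k - 2) (t - 1) (lower m t F) := by
  refine ⟨fun C hC => subset_range_of_mem_memberSubfamily hF (mem_lower.1 hC).1,
    fun C hC => ?_, fun C hC => ?_, disjointSumLE_lower hF hsh hk⟩
  all_goals have := card_bounds_of_mem_memberSubfamily hF (mem_lower.1 hC).1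
  all_goals omega

end

lemma admissible_lower_zero (hF : Admissible (m + 2) k 0 F) (hsh : Shifted F) (hk : k ≤ m)
    (hs : {m + 1} ∉ F) : Admissible (m + 1) (k - 1) 0 (lower m 0 F) := by
  refine ⟨fun C hC => subset_range_of_mem_memberSubfamily hF (mem_lower.1 hC).1,
    fun C hC => ?_, fun C hC => ?_, fun C hC D hD hCD => ?_⟩
  · have hCG := mem_memberSubfamily.1 (mem_lower.1 hC).1
    refine card_pos.2 (nonempty_iff_ne_empty.2 fun hC0 => hs ?_)
    simpa [hC0] using hCG.1
  · have := card_bounds_of_mem_memberSubfamily hF (mem_lower.1 hC).1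
    omega
  · have := disjointSumLE_lower hF hsh hk C hC D hD hCD
    omega

end Split

def CardBound (m : ℕ) : Prop :=
  ∀ k t (F : Finset (Finset ℕ)), k ≤ m → Admissible (m + 1) k t F →
    #F ≤ ∑ j ∈ Ico t (k - t), m.choose j

section Induction

variable {m k t : ℕ} {F : Finset (Finset ℕ)}

lemma card_le_of_shifted (ih : CardBound m) (hk : k ≤ m) (hF : Admissible (m + 2) k t F)
    (hsh : Shifted F) (hs : t = 0 → {m + 1} ∉ F) :
    #F ≤ ∑ j ∈ Ico t (k - t), (m + 1).choose j := by
  have hupper := ih k t _ hk (Split.admissible_upper hF hsh)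
  have hlower : #(Split.lower m t F) ≤ ∑ j ∈ Ico (t - 1) (k - t - 1), m.choose j := by
    rcases t.eq_zero_or_pos with rfl | ht
    · simpa using ih (k - 1) 0 _ (by omega) (Split.admissible_lower_zero hF hsh hk (hs rfl))
    · have := ih (k - 2) (t - 1) _ (by omega) (Split.admissible_lower hF hsh hk ht)
      rwa [show k - 2 - (t - 1) = k - t - 1 by omega] at this
  rw [Split.card_eq_card_upper_add_card_lower (m := m) (t := t), sum_Ico_choose_succ]
  omega

/-- If `{m + 1} ∈ F`, shifting puts every singleton in `F`, so the other members have at least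
two and at most `k - 1` elements. -/
lemma card_le_of_singleton_mem (ih : CardBound m) (hk : k ≤ m) (hF : Admissible (m + 2) k 0 F)
    (hsh : Shifted F) (hs : {m + 1} ∈ F) : #F ≤ ∑ j ∈ Ico 0 k, (m + 1).choose j := by
  have hsingle : ∀ x ∈ range (m + 2), {x} ∈ F := fun x hx =>
    hsh.singleton_mem hs (Nat.le_of_lt_succ (mem_range.1 hx))
  have hsmall : ∀ A ∈ F, #A + 1 ≤ k := by
    intro A hA
    obtain ⟨x, hx, hxA⟩ : ∃ x ∈ range (m + 2), x ∉ A := exists_mem_notMem_of_card_lt_card (by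
      linarith [hF.card_add_le A hA, card_range (m + 2)])
    simpa using hF.disjointSumLE A hA {x} (hsingle x hx) (disjoint_singleton_right.2 hxA)
  set R := {A ∈ F | 1 < #A}
  have hR : Admissible (m + 2) k 1 R := by
    refine ⟨fun A hA => hF.subset_range A (mem_filter.1 hA).1, fun A hA => (mem_filter.1 hA).2,
      fun A hA => hsmall A (mem_filter.1 hA).1,
      fun A hA B hB => hF.disjointSumLE A (mem_filter.1 hA).1 B (mem_filter.1 hB).1⟩
  have hsingletons : {A ∈ F | ¬1 < #A} = (range (m + 2)).map ⟨_, singleton_injective⟩ := by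
    ext A
    simp only [mem_filter, mem_map, Function.Embedding.coeFn_mk, not_lt]
    constructor
    · rintro ⟨hA, hA1⟩
      obtain ⟨x, rfl⟩ := card_eq_one.1 (le_antisymm hA1 (hF.lt_card A hA))
      exact ⟨x, hF.subset_range _ hA (mem_singleton_self x), rfl⟩
    · rintro ⟨x, hx, rfl⟩
      exact ⟨hsingle x hx, (card_singleton x).le⟩
  have hcard : #F = #R + (m + 2) := by
    rw [← card_filter_add_card_filter_not (fun A => 1 < #A), hsingletons, card_map, card_range]
  have hk2 : 2 ≤ k := by simpa using hsmall _ hs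
  have hR' := card_le_of_shifted ih hk hR (hsh.filter_card _) (by simp)
  have hchoose := le_choose_of_pos_of_lt (m := m + 1) (r := k - 1) (by omega) (by omega)
  rw [sum_eq_sum_Ico_succ_bot (by omega), ← Nat.sub_add_cancel (by omega : 1 ≤ k),
    sum_Ico_succ_top (by omega)]
  simp only [Nat.choose_zero_right, zero_add] at hR' ⊢
  omega

theorem card_le_sum_choose (m : ℕ) : CardBound m := by
  induction m with
  | zero =>
    intro k t F hk hF
    obtain rfl : k = 0 := by omega
    exact hF.card_le_sum_choose_self
  | succ m ih =>
    intro k t F hk hF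
    rcases hk.eq_or_lt with rfl | hk
    · exact hF.card_le_sum_choose_self
    obtain ⟨H, hHcard, hH, hHsh⟩ := hF.exists_shifted
    rw [← hHcard]
    by_cases hs : t = 0 ∧ {m + 1} ∈ H
    · obtain ⟨rfl, hs⟩ := hs
      exact card_le_of_singleton_mem ih (by omega) hH hHsh hs
    · exact card_le_of_shifted ih (by omega) hH hHsh fun ht hmem => hs ⟨ht, hmem⟩

end Induction

lemma admissible_image_map_valEmbedding {n k : ℕ} {F : Finset (Finset (Fin n))}
    (hne : ∀ A ∈ F, A.Nonempty) (hcard : ∀ A ∈ F, #A ≤ k)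
    (hdisj : ∀ A ∈ F, ∀ B ∈ F, Disjoint A B → #A + #B ≤ k) :
    Admissible n k 0 (F.image (map Fin.valEmbedding)) := by
  refine ⟨?_, ?_, ?_, ?_⟩ <;> simp only [DisjointSumLE, forall_mem_image, card_map]
  · intro A _ x hx
    obtain ⟨y, -, rfl⟩ := mem_map.1 hx
    exact mem_range.2 y.isLt
  · exact fun A hA => card_pos.2 (hne A hA)
  · exact hcard
  · exact fun A hA B hB hAB => hdisj A hA B hB ((disjoint_map _).1 hAB)

end NonuniformEKR

theorem stmt_11_general (n k : ℕ) (hk2 : k ≤ n - 1)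
    (F : Finset (Finset (Fin n)))
    (hne : ∀ A ∈ F, A.Nonempty) (hcard : ∀ A ∈ F, A.card ≤ k)
    (hdisj : ∀ A ∈ F, ∀ B ∈ F, Disjoint A B → A.card + B.card ≤ k) :
    F.card ≤ ∑ i ∈ Finset.range k, (n - 1).choose i := by
  have hF := NonuniformEKR.admissible_image_map_valEmbedding hne hcard hdisj
  have hF' : NonuniformEKR.Admissible (n - 1 + 1) k 0 (F.image (map Fin.valEmbedding)) :=
    { hF with
      subset_range := fun A hA => (hF.subset_range A hA).trans (range_subset_range.2 (by omega)) }
  have := NonuniformEKR.card_le_sum_choose (n - 1) k 0 _ hk2 hF'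
  rwa [card_image_of_injective _ (map_injective _), Nat.sub_zero, ← range_eq_Ico] at this

theorem stmt_11 (n k : ℕ) (hk1 : 1 ≤ k) (hk2 : k ≤ n - 1)
    (F : Finset (Finset (Fin n)))
    (hne : ∀ A ∈ F, A.Nonempty) (hcard : ∀ A ∈ F, A.card ≤ k)
    (hdisj : ∀ A ∈ F, ∀ B ∈ F, Disjoint A B → A.card + B.card ≤ k) :
    F.card ≤ ∑ i ∈ Finset.range k, (n - 1).choose i :=
  stmt_11_general n k hk2 F hne hcard hdisj
end

section
/- Let 1 ≤ k ≤ n-1 and let F be an upset in the poset of subsets of [n] of size at most k (i.e., if A ∈ F and A ⊆ B ⊆ [n] with |B| ≤ k, then B ∈ F), with ∅ ∉ F. Suppose for every A, B ∈ F with A ∩ B = ∅ one has |A| + |B| ≤ k. Then F is an intersecting family. -/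
theorem stmt_12 (n k : ℕ) (hk1 : 1 ≤ k) (hk2 : k ≤ n - 1)
    (F : Finset (Finset (Fin n)))
    (hcard : ∀ A ∈ F, A.card ≤ k) (hemp : ∅ ∉ F)
    (hup : ∀ A ∈ F, ∀ B : Finset (Fin n), A ⊆ B → B.card ≤ k → B ∈ F)
    (hdisj : ∀ A ∈ F, ∀ B ∈ F, Disjoint A B → A.card + B.card ≤ k) :
    ∀ A ∈ F, ∀ B ∈ F, (A ∩ B).Nonempty := by
  intro A hA B hB
  rw [← Finset.not_disjoint_iff_nonempty_inter]
  intro hd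
  have hAne : A ≠ ∅ := fun h => hemp (h ▸ hA)
  have hA1 : 1 ≤ A.card := Finset.card_pos.mpr (Finset.nonempty_iff_ne_empty.mpr hAne)
  have hkn : k + 1 ≤ n := by omega
  have hAB := hdisj A hA B hB hd
  have hBsub : B ⊆ Finset.univ \ A := by
    intro x hx
    simp only [Finset.mem_sdiff, Finset.mem_univ, true_and]
    exact fun hxA => (Finset.disjoint_left.mp hd hxA) hx
  have hcardsdiff : (Finset.univ \ A : Finset (Fin n)).card = n - A.card := by
    rw [Finset.card_sdiff_of_subset (Finset.subset_univ A)]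
    simp
  obtain ⟨B', hBB', hB'sub, hB'card⟩ := Finset.exists_subsuperset_card_eq hBsub
    (by omega) (by omega : k + 1 - A.card ≤ (Finset.univ \ A : Finset (Fin n)).card)
  have hB'F : B' ∈ F := hup B hB B' hBB' (by omega)
  have hdisj' : Disjoint A B' := by
    rw [Finset.disjoint_right]
    intro x hx hxA
    exact (Finset.mem_sdiff.mp (hB'sub hx)).2 hxA
  have := hdisj A hA B' hB'F hdisj'
  omega
end

section
/- For 1 ≤ k ≤ n, every intersecting family of subsets of [n], each of size at most k, has size at most C(n-1,k-1) + C(n-1,k-2) + ... + C(n-1,0). -/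
/-!
Split `F` into its slices `F # r`, `1 ≤ r ≤ k`. A slice with `2r < n` is bounded by
Erdős–Ko–Rado by `C(n-1, r-1)`. For `n - k ≤ r ≤ k` the slices pair up as `r ↔ n - r`: taking
complements of `F # (n - r)` gives `r`-sets disjoint from `F # r`, so the two slices together
have at most `C(n, r) = C(n-1, r-1) + C(n-1, n-r-1)` members, the sum of the two target terms.
For `k = n` the bound `2^(n-1)` on any intersecting family suffices.
-/

open Finset

theorem Finset.sum_Icc_reflect {M : Type*} [AddCommMonoid M] (φ : ℕ → M) {n k : ℕ}
    (hk : k ≤ n) :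
    ∑ i ∈ Icc (n - k) k, φ (n - i) = ∑ i ∈ Icc (n - k) k, φ i := by
  refine sum_nbij' (n - ·) (n - ·) ?_ ?_ ?_ ?_ fun _ _ ↦ rfl <;> intro i hi <;>
    simp only [mem_Icc] at hi ⊢ <;> omega

theorem Finset.sum_Icc_le_sum_Icc_of_reflect {f g : ℕ → ℕ} {n k : ℕ} (hk : k < n)
    (hlow : ∀ i, 2 * i < n → f i ≤ g i)
    (hpair : ∀ i, 1 ≤ i → i < n → f i + f (n - i) ≤ g i + g (n - i)) :
    ∑ i ∈ Icc 1 k, f i ≤ ∑ i ∈ Icc 1 k, g i := by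
  have hblock : ∑ i ∈ Icc (n - k) k, f i ≤ ∑ i ∈ Icc (n - k) k, g i := by
    have h := sum_le_sum fun i (hi : i ∈ Icc (n - k) k) ↦
      hpair i (by simp only [mem_Icc] at hi; omega) (by simp only [mem_Icc] at hi; omega)
    rw [sum_add_distrib, sum_add_distrib, sum_Icc_reflect f hk.le, sum_Icc_reflect g hk.le] at h
    omega
  have hhigh : {i ∈ Icc 1 k | ¬i < n - k} = Icc (n - k) k := by
    ext i; simp only [mem_filter, mem_Icc]; omega
  rw [← sum_filter_add_sum_filter_not (Icc 1 k) (· < n - k),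
    ← sum_filter_add_sum_filter_not (Icc 1 k) (· < n - k), hhigh]
  refine add_le_add (sum_le_sum fun i hi ↦ hlow i ?_) hblock
  simp only [mem_filter, mem_Icc] at hi
  omega

theorem Nat.choose_eq_choose_pred_add_choose_pred {n i : ℕ} (hi : 1 ≤ i) (hin : i < n) :
    n.choose i = (n - 1).choose (i - 1) + (n - 1).choose (n - i - 1) := by
  obtain ⟨m, rfl⟩ : ∃ m, n = m + 1 := ⟨n - 1, by omega⟩
  obtain ⟨j, rfl⟩ : ∃ j, i = j + 1 := ⟨i - 1, by omega⟩
  rw [Nat.choose_succ_succ', Nat.choose_symm_of_eq_add (a := j + 1) (b := m - j - 1) (by omega)]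
  simp

theorem Set.Intersecting.card_slice_add_card_slice_compl_le {α : Type*} [Fintype α]
    [DecidableEq α] {𝒜 : Finset (Finset α)} (h𝒜 : (𝒜 : Set (Finset α)).Intersecting) {r : ℕ}
    (hr : r ≤ Fintype.card α) :
    #(𝒜 # r) + #(𝒜 # (Fintype.card α - r)) ≤ (Fintype.card α).choose r := by
  set ℬ := (𝒜 # (Fintype.card α - r)).image compl
  have hdisj : Disjoint (𝒜 # r) ℬ := by
    refine Finset.disjoint_left.2 fun A hA hAℬ ↦ ?_
    obtain ⟨B, hB, rfl⟩ := Finset.mem_image.1 hAℬ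
    exact h𝒜 (slice_subset hB) (slice_subset hA) disjoint_compl_right
  have hsized : ((𝒜 # r ∪ ℬ : Finset (Finset α)) : Set (Finset α)).Sized r := by
    intro A hA
    rcases Finset.mem_union.1 hA with hA | hA
    · exact sized_slice hA
    · obtain ⟨B, hB, rfl⟩ := Finset.mem_image.1 hA
      rw [Finset.card_compl, sized_slice hB]
      omega
  calc #(𝒜 # r) + #(𝒜 # (Fintype.card α - r)) = #(𝒜 # r ∪ ℬ) := by
        rw [card_union_of_disjoint hdisj, Finset.card_image_of_injective _ compl_injective]
    _ ≤ (Fintype.card α).choose r := hsized.card_le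

theorem Set.Intersecting.card_slice_le {n r : ℕ} {𝒜 : Finset (Finset (Fin n))}
    (h𝒜 : (𝒜 : Set (Finset (Fin n))).Intersecting) (hr : 2 * r ≤ n) :
    #(𝒜 # r) ≤ (n - 1).choose (r - 1) :=
  erdos_ko_rado (h𝒜.mono (Finset.coe_subset.2 slice_subset)) sized_slice (by omega)

theorem Set.Intersecting.card_le_sum_range_choose {n : ℕ} {𝒜 : Finset (Finset (Fin n))}
    (h𝒜 : (𝒜 : Set (Finset (Fin n))).Intersecting) :
    #𝒜 ≤ ∑ i ∈ Finset.range n, (n - 1).choose i := by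
  have h := h𝒜.card_le
  rw [Fintype.card_finset, Fintype.card_fin] at h
  rcases n with _ | m
  · rw [pow_zero] at h
    rw [Finset.range_zero, Finset.sum_empty]
    omega
  · rw [pow_succ] at h
    rw [Nat.add_sub_cancel, Nat.sum_range_choose]
    omega

theorem stmt_13_general (n k : ℕ) (hk2 : k ≤ n)
    (F : Finset (Finset (Fin n)))
    (hcard : ∀ A ∈ F, A.card ≤ k)
    (hint : ∀ A ∈ F, ∀ B ∈ F, (A ∩ B).Nonempty) :
    F.card ≤ ∑ i ∈ Finset.range k, (n - 1).choose i := by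
  have hF : (F : Set (Finset (Fin n))).Intersecting := fun A hA B hB ↦
    (hint A hA B hB).not_disjoint
  rcases hk2.eq_or_lt with rfl | hkn
  · exact hF.card_le_sum_range_choose
  calc #F = ∑ r ∈ Icc 1 k, #(F # r) := card_eq_sum_card_fiberwise fun A hA ↦
        mem_Icc.2 ⟨card_pos.2 (by simpa using hint A hA A hA), hcard A hA⟩
    _ ≤ ∑ r ∈ Icc 1 k, (n - 1).choose (r - 1) := by
      refine sum_Icc_le_sum_Icc_of_reflect hkn (fun r hr ↦ hF.card_slice_le hr.le)
        fun r hr hrn ↦ ?_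
      have h := hF.card_slice_add_card_slice_compl_le (α := Fin n) (r := r) (by simp; omega)
      rwa [Fintype.card_fin, Nat.choose_eq_choose_pred_add_choose_pred hr hrn] at h
    _ = ∑ i ∈ range k, (n - 1).choose i := by
      rw [range_eq_Ico, ← Ico_add_one_right_eq_Icc, ← zero_add 1, ← sum_Ico_add']
      simp

theorem stmt_13 (n k : ℕ) (hk1 : 1 ≤ k) (hk2 : k ≤ n)
    (F : Finset (Finset (Fin n)))
    (hcard : ∀ A ∈ F, A.card ≤ k)
    (hint : ∀ A ∈ F, ∀ B ∈ F, (A ∩ B).Nonempty) :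
    F.card ≤ ∑ i ∈ Finset.range k, (n - 1).choose i :=
  stmt_13_general n k hk2 F hcard hint
end

section
/- Let F be a family of nonempty subsets of [n] of size at most k satisfying: for all A, B ∈ F with A ∩ B = ∅, |A| + |B| ≤ k. Fix i ∈ [n] and define S_i(A) = A if A ∪ {i} ∈ F or |A| = k, and S_i(A) = A ∪ {i} otherwise. Then the family S_i(F) = {S_i(A) : A ∈ F} has the same cardinality as F and also satisfies: for all A', B' ∈ S_i(F) with A' ∩ B' = ∅, |A'| + |B'| ≤ k. -/
theorem stmt_14 (n k : ℕ) (F : Finset (Finset (Fin n)))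
    (hne : ∀ A ∈ F, A.Nonempty) (hcard : ∀ A ∈ F, A.card ≤ k)
    (hdisj : ∀ A ∈ F, ∀ B ∈ F, Disjoint A B → A.card + B.card ≤ k)
    (i : Fin n) :
    (F.image (fun A => if A ∪ {i} ∈ F ∨ A.card = k then A else A ∪ {i})).card = F.card ∧
      ∀ A' ∈ F.image (fun A => if A ∪ {i} ∈ F ∨ A.card = k then A else A ∪ {i}),
        ∀ B' ∈ F.image (fun A => if A ∪ {i} ∈ F ∨ A.card = k then A else A ∪ {i}),
          Disjoint A' B' → A'.card + B'.card ≤ k := by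
  set f : Finset (Fin n) → Finset (Fin n) :=
    fun A => if A ∪ {i} ∈ F ∨ A.card = k then A else A ∪ {i} with hfdef
  have key : ∀ A ∈ F, (f A = A ∧ (A ∪ {i} ∈ F ∨ A.card = k)) ∨
      (f A = A ∪ {i} ∧ i ∉ A ∧ A ∪ {i} ∉ F ∧ A.card < k) := by
    intro A hA
    by_cases h : A ∪ {i} ∈ F ∨ A.card = k
    · exact Or.inl ⟨if_pos h, h⟩
    · push_neg at h
      refine Or.inr ⟨if_neg (by push_neg; exact h), ?_, h.1, lt_of_le_of_ne (hcard A hA) h.2⟩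
      intro hi
      exact h.1 (by rwa [Finset.union_eq_left.mpr (Finset.singleton_subset_iff.mpr hi)])
  have hinj : Set.InjOn f F := by
    intro A hA B hB hAB
    rcases key A hA with ⟨hA1, _⟩ | ⟨hA1, hiA, hAF, _⟩ <;>
      rcases key B hB with ⟨hB1, _⟩ | ⟨hB1, hiB, hBF, _⟩ <;>
      rw [hA1, hB1] at hAB
    · exact hAB
    · rw [hAB] at hA; exact absurd hA hBF
    · rw [← hAB] at hB; exact absurd hB hAF
    · ext x
      have hx := Finset.ext_iff.mp hAB x
      simp only [Finset.mem_union, Finset.mem_singleton] at hx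
      constructor
      · intro hxx
        rcases hx.mp (Or.inl hxx) with h | h
        · exact h
        · exact absurd (h ▸ hxx) hiA
      · intro hxx
        rcases hx.mpr (Or.inl hxx) with h | h
        · exact h
        · exact absurd (h ▸ hxx) hiB
  constructor
  · exact Finset.card_image_of_injOn hinj
  · intro A' hA' B' hB' hd
    obtain ⟨A, hA, hfA⟩ := Finset.mem_image.mp hA'
    obtain ⟨B, hB, hfB⟩ := Finset.mem_image.mp hB'
    subst hfA hfB
    rcases key A hA with ⟨hA1, hAc⟩ | ⟨hA1, hiA, hAF, hAk⟩ <;>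
      rcases key B hB with ⟨hB1, hBc⟩ | ⟨hB1, hiB, hBF, hBk⟩ <;>
      rw [hA1, hB1] at hd ⊢
    · exact hdisj A hA B hB hd
    · -- A' = A, B' = B ∪ {i}
      rw [Finset.disjoint_union_right, Finset.disjoint_singleton_right] at hd
      have hcardB : (B ∪ {i}).card = B.card + 1 := by
        rw [Finset.card_union_of_disjoint (Finset.disjoint_singleton_right.mpr hiB)]
        simp
      rcases hAc with hc | hc
      · have h1 := hdisj (A ∪ {i}) hc B hB
          (by rw [Finset.disjoint_union_left, Finset.disjoint_singleton_left]
              exact ⟨hd.1, hiB⟩)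
        have hcardA : (A ∪ {i}).card = A.card + 1 := by
          rw [Finset.card_union_of_disjoint (Finset.disjoint_singleton_right.mpr hd.2)]
          simp
        omega
      · have h1 := hdisj A hA B hB hd.1
        have h2 : 1 ≤ B.card := Finset.card_pos.mpr (hne B hB)
        omega
    · -- A' = A ∪ {i}, B' = B
      rw [Finset.disjoint_union_left, Finset.disjoint_singleton_left] at hd
      have hcardA : (A ∪ {i}).card = A.card + 1 := by
        rw [Finset.card_union_of_disjoint (Finset.disjoint_singleton_right.mpr hiA)]
        simp
      rcases hBc with hc | hc
      · have h1 := hdisj A hA (B ∪ {i}) hc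
          (by rw [Finset.disjoint_union_right, Finset.disjoint_singleton_right]
              exact ⟨hd.1, hiA⟩)
        have hcardB : (B ∪ {i}).card = B.card + 1 := by
          rw [Finset.card_union_of_disjoint (Finset.disjoint_singleton_right.mpr hd.2)]
          simp
        omega
      · have h1 := hdisj A hA B hB hd.1
        have h2 : 1 ≤ A.card := Finset.card_pos.mpr (hne A hA)
        omega
    · exact absurd (Finset.disjoint_left.mp hd
        (Finset.mem_union_right _ (Finset.mem_singleton_self i)))
        (fun h => h (Finset.mem_union_right _ (Finset.mem_singleton_self i)))
end

section
/- For n ≥ 2 and 1 ≤ k ≤ n-1, let x_1 = k-1 and x_2 = ... = x_n = -1. Then every subset of {1,...,n} of size greater than k has negative sum, and the number of subsets with nonnegative sum equals C(n-1,k-1) + C(n-1,k-2) + ... + C(n-1,0) + 1. -/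
/-! Since `x i + 1` is `k` at index `0` and `0` elsewhere, the sum of `x` over `S` is
`k·[0 ∈ S] - #S`. Hence a set with more than `k` elements has negative sum, and the sets with
nonnegative sum are `∅` together with the sets containing `0` and at most `k - 1` further indices;
removing `0` identifies the latter with the subsets of size `< k` of an `(n - 1)`-element set. -/

open Finset

theorem Finset.card_filter_powerset_card_lt {α : Type*} (s : Finset α) (k : ℕ) :
    #{T ∈ s.powerset | #T < k} = ∑ j ∈ range k, (#s).choose j := by
  rw [card_eq_sum_card_fiberwise (f := card) (t := range k)
    fun T hT => by simpa using (mem_filter.mp hT).2]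
  refine sum_congr rfl fun j hj => ?_
  rw [← card_powersetCard, powersetCard_eq_filter, filter_filter]
  congr 1
  exact filter_congr fun T _ => ⟨And.right, by rintro rfl; exact ⟨mem_range.mp hj, rfl⟩⟩

theorem Finset.card_filter_mem_card_le {α : Type*} [Fintype α] [DecidableEq α] (a : α) (k : ℕ) :
    #{S : Finset α | a ∈ S ∧ #S ≤ k} = ∑ j ∈ range k, (Fintype.card α - 1).choose j := by
  rw [← card_univ, ← card_erase_of_mem (mem_univ a), ← card_filter_powerset_card_lt]
  have not_mem {T : Finset α} (hT : T ∈ {T ∈ (univ.erase a).powerset | #T < k}) : a ∉ T :=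
    fun h => by simpa using mem_powerset.mp (mem_filter.mp hT).1 h
  refine card_nbij' (erase · a) (insert a) (fun S hS => ?_) (fun T hT => ?_)
    (fun S hS => insert_erase (mem_filter.mp hS).2.1) (fun T hT => erase_insert (not_mem hT))
  · obtain ⟨-, haS, hSk⟩ := mem_filter.mp hS
    exact mem_filter.mpr ⟨mem_powerset.mpr (erase_subset_erase a (subset_univ S)),
      (card_erase_lt_of_mem haS).trans_le hSk⟩
  · refine mem_filter.mpr ⟨mem_univ _, mem_insert_self a T, ?_⟩
    rw [card_insert_of_notMem (not_mem hT)]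
    exact (mem_filter.mp hT).2

section
variable {ι : Type*} [DecidableEq ι] {a : ι} {k : ℕ} {x : ι → ℝ}

theorem sum_eq_ite_sub_card (ha : x a = k - 1) (hx : ∀ i ≠ a, x i = -1) (S : Finset ι) :
    ∑ i ∈ S, x i = (if a ∈ S then (k : ℝ) else 0) - #S := by
  have hx' : ∀ i, x i = (if a = i then (k : ℝ) else 0) - 1 := by
    intro i
    rcases eq_or_ne i a with rfl | hi
    · simp [ha]
    · simp [hx i hi, Ne.symm hi]
  simp only [hx', sum_sub_distrib, sum_ite_eq, sum_const, nsmul_one]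

theorem sum_neg_of_lt_card (ha : x a = k - 1) (hx : ∀ i ≠ a, x i = -1) {S : Finset ι}
    (hS : k < #S) : ∑ i ∈ S, x i < 0 := by
  have hS' : (k : ℝ) < #S := by exact_mod_cast hS
  rw [sum_eq_ite_sub_card ha hx]
  split_ifs <;> linarith [k.cast_nonneg (α := ℝ)]

theorem sum_nonneg_iff (ha : x a = k - 1) (hx : ∀ i ≠ a, x i = -1) {S : Finset ι} :
    0 ≤ ∑ i ∈ S, x i ↔ S = ∅ ∨ a ∈ S ∧ #S ≤ k := by
  rw [sum_eq_ite_sub_card ha hx]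
  by_cases haS : a ∈ S
  · simp [haS, ne_empty_of_mem haS]
  · simp [haS]

theorem card_filter_sum_nonneg [Fintype ι] (ha : x a = k - 1) (hx : ∀ i ≠ a, x i = -1) :
    #{S : Finset ι | 0 ≤ ∑ i ∈ S, x i} = ∑ j ∈ range k, (Fintype.card ι - 1).choose j + 1 := by
  have : univ.filter (fun S : Finset ι => 0 ≤ ∑ i ∈ S, x i) =
      insert ∅ (univ.filter fun S => a ∈ S ∧ #S ≤ k) := by
    ext S
    simp [sum_nonneg_iff ha hx]
  rw [this, card_insert_of_notMem (by simp), card_filter_mem_card_le]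

end

theorem stmt_16_general (n k : ℕ) (hn : 2 ≤ n)
    (x : Fin n → ℝ)
    (h0 : ∀ i : Fin n, (i : ℕ) = 0 → x i = (k : ℝ) - 1)
    (h1 : ∀ i : Fin n, 1 ≤ (i : ℕ) → x i = -1) :
    (∀ S : Finset (Fin n), k < S.card → ∑ i ∈ S, x i < 0) ∧
      (Finset.univ.filter (fun S : Finset (Fin n) => 0 ≤ ∑ i ∈ S, x i)).card =
        (∑ i ∈ Finset.range k, (n - 1).choose i) + 1 := by
  let a : Fin n := ⟨0, by omega⟩
  have ha : x a = k - 1 := h0 a rfl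
  have hx : ∀ i ≠ a, x i = -1 := fun i hi =>
    h1 i (Nat.one_le_iff_ne_zero.mpr fun h => hi (Fin.ext h))
  refine ⟨fun S => sum_neg_of_lt_card ha hx, ?_⟩
  rw [card_filter_sum_nonneg ha hx, Fintype.card_fin]

theorem stmt_16 (n k : ℕ) (hn : 2 ≤ n) (hk1 : 1 ≤ k) (hk2 : k ≤ n - 1)
    (x : Fin n → ℝ)
    (h0 : ∀ i : Fin n, (i : ℕ) = 0 → x i = (k : ℝ) - 1)
    (h1 : ∀ i : Fin n, 1 ≤ (i : ℕ) → x i = -1) :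
    (∀ S : Finset (Fin n), k < S.card → ∑ i ∈ S, x i < 0) ∧
      (Finset.univ.filter (fun S : Finset (Fin n) => 0 ≤ ∑ i ∈ S, x i)).card =
        (∑ i ∈ Finset.range k, (n - 1).choose i) + 1 :=
  stmt_16_general n k hn x h0 h1
end

section
/- For integers 1 ≤ t ≤ k < n, let x_1 = k-t, x_2 = ... = x_t = 0, and x_{t+1} = ... = x_n = -1. Then every subset of {1,...,n} of size greater than k has negative sum, exactly t of the numbers are nonnegative, and the number of subsets with nonnegative sum equals 2^{t-1}(C(n-t,k-t) + ... + C(n-t,0) + 1). -/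
/-!
Put `a = 0`, `Z = {1, …, t-1}` and `T = {t, …, n-1}`, so that `x a = k - t`, `x` vanishes on
`Z` and equals `-1` on `T`. A set `S` has sum `(k - t)·[a ∈ S] - #(S ∩ T)`, and at most `t` of its
elements lie outside `T`; hence `#S > k` forces a negative sum. The elements of `Z` do not affect
the sum, which gives the factor `2 ^ (t - 1)`. Among subsets of `insert a T`, those avoiding `a`
have nonnegative sum only when empty, and `insert a C` with `C ⊆ T` has nonnegative sum exactly
when `#C ≤ k - t`.
-/

open Finset

namespace Finset

variable {α : Type*}

theorem card_filter_powerset_card_le (T : Finset α) (m : ℕ) :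
    #{C ∈ T.powerset | #C ≤ m} = ∑ i ∈ range (m + 1), (#T).choose i := by
  rw [card_filter, sum_powerset_apply_card fun j => if j ≤ m then 1 else 0]
  simp only [smul_eq_mul, mul_ite, mul_one, mul_zero, ← sum_filter]
  refine sum_subset (fun i hi => by simp only [mem_filter, mem_range] at hi ⊢; omega) ?_
  intro i hi hi'
  simp only [mem_filter, mem_range, not_and] at hi hi'
  exact Nat.choose_eq_zero_of_lt (by omega)

theorem sum_eq_neg_card_of_forall_eq_neg_one {f : α → ℝ} {T C : Finset α}
    (hT : ∀ i ∈ T, f i = -1) (hC : C ⊆ T) : ∑ i ∈ C, f i = -#C := by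
  rw [sum_congr rfl fun i hi => hT i (hC hi)]
  simp

variable [DecidableEq α]

theorem card_filter_powerset_insert {s : Finset α} {a : α} (ha : a ∉ s)
    (p : Finset α → Prop) [DecidablePred p] :
    #{S ∈ (insert a s).powerset | p S} =
      #{S ∈ s.powerset | p S} + #{S ∈ s.powerset | p (insert a S)} := by
  simp only [card_filter, sum_powerset_insert ha]

theorem card_filter_powerset_union_of_forall_eq_zero {M : Type*} [AddCommMonoid M]
    (f : α → M) (p : M → Prop) [DecidablePred p] {Z s : Finset α} (hZs : Disjoint Z s)
    (hZ : ∀ i ∈ Z, f i = 0) :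
    #{S ∈ (Z ∪ s).powerset | p (∑ i ∈ S, f i)} =
      2 ^ #Z * #{S ∈ s.powerset | p (∑ i ∈ S, f i)} := by
  induction Z using Finset.induction_on with
  | empty => simp
  | insert a Z haZ ih =>
    rw [disjoint_insert_left] at hZs
    have has : a ∉ Z ∪ s := by simp [haZ, hZs.1]
    have hsum_insert : ∀ S ∈ (Z ∪ s).powerset, ∑ i ∈ insert a S, f i = ∑ i ∈ S, f i :=
      fun S hS => by
        rw [sum_insert (notMem_of_mem_powerset_of_notMem hS has), hZ a (mem_insert_self a Z),
          zero_add]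
    have hfilter : {S ∈ (Z ∪ s).powerset | p (∑ i ∈ insert a S, f i)} =
        {S ∈ (Z ∪ s).powerset | p (∑ i ∈ S, f i)} :=
      filter_congr fun S hS => by rw [hsum_insert S hS]
    rw [insert_union, card_filter_powerset_insert has, hfilter,
      ih hZs.2 fun i hi => hZ i (mem_insert_of_mem hi), card_insert_of_notMem haZ, pow_succ]
    ring

section

variable {f : α → ℝ} {a : α} {Z T : Finset α} {m : ℕ}

theorem card_filter_powerset_insert_sum_nonneg (haT : a ∉ T) (ha : f a = m)
    (hT : ∀ i ∈ T, f i = -1) :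
    #{S ∈ (insert a T).powerset | 0 ≤ ∑ i ∈ S, f i} =
      ∑ i ∈ range (m + 1), (#T).choose i + 1 := by
  rw [card_filter_powerset_insert haT, ← card_filter_powerset_card_le, add_comm]
  congr 1
  · refine congrArg card (filter_congr fun C hC => ?_)
    rw [mem_powerset] at hC
    rw [sum_insert (notMem_mono hC haT), ha, sum_eq_neg_card_of_forall_eq_neg_one hT hC,
      ← sub_eq_add_neg, sub_nonneg, Nat.cast_le]
  · rw [card_eq_one]
    refine ⟨∅, eq_singleton_iff_unique_mem.2 ⟨by simp, fun C hC => ?_⟩⟩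
    rw [mem_filter, mem_powerset] at hC
    rw [sum_eq_neg_card_of_forall_eq_neg_one hT hC.1, neg_nonneg, Nat.cast_nonpos] at hC
    exact card_eq_zero.1 hC.2

theorem card_filter_union_insert_nonneg (haZ : a ∉ Z) (ha : f a = m)
    (hZ : ∀ i ∈ Z, f i = 0) (hT : ∀ i ∈ T, f i = -1) :
    #{i ∈ Z ∪ insert a T | 0 ≤ f i} = #Z + 1 := by
  have hfilter : {i ∈ Z ∪ insert a T | 0 ≤ f i} = insert a Z := by
    ext i
    simp only [mem_filter, mem_union, mem_insert]
    constructor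
    · rintro ⟨hi | rfl | hi, hfi⟩
      · exact Or.inr hi
      · exact Or.inl rfl
      · rw [hT i hi] at hfi
        norm_num at hfi
    · rintro (rfl | hi)
      · exact ⟨Or.inr (Or.inl rfl), ha ▸ m.cast_nonneg⟩
      · exact ⟨Or.inl hi, (hZ i hi).ge⟩
  rw [hfilter, card_insert_of_notMem haZ]

theorem sum_neg_of_card_lt (haZ : a ∉ Z) (ha : f a = m)
    (hZ : ∀ i ∈ Z, f i = 0) (hT : ∀ i ∈ T, f i = -1) {S : Finset α}
    (hS : S ⊆ Z ∪ insert a T) (hcard : m + #Z + 1 < #S) : ∑ i ∈ S, f i < 0 := by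
  have hST : S \ T ⊆ insert a Z := fun i hi => by
    have := hS (mem_sdiff.1 hi).1
    simp only [mem_union, mem_insert] at this ⊢
    have := (mem_sdiff.1 hi).2
    tauto
  have hsum_out : ∑ i ∈ S \ T, f i ≤ m := calc
    ∑ i ∈ S \ T, f i ≤ ∑ i ∈ insert a Z, f i :=
      sum_le_sum_of_subset_of_nonneg hST fun i hi _ => by
        rcases mem_insert.1 hi with rfl | hi
        · rw [ha]; positivity
        · rw [hZ i hi]
    _ = m := by rw [sum_insert haZ, ha, sum_eq_zero hZ, add_zero]
  have hcard_in : m < #(S ∩ T) := by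
    have := card_le_card hST
    have := card_insert_le a Z
    have := card_inter_add_card_sdiff S T
    omega
  rw [← sum_inter_add_sum_sdiff S T,
    sum_eq_neg_card_of_forall_eq_neg_one hT inter_subset_right]
  have : (m : ℝ) < #(S ∩ T) := by exact_mod_cast hcard_in
  linarith

end

end Finset

theorem stmt_17 (n k t : ℕ) (ht : 1 ≤ t) (htk : t ≤ k) (hkn : k < n)
    (x : Fin n → ℝ)
    (h0 : ∀ i : Fin n, (i : ℕ) = 0 → x i = (k : ℝ) - t)
    (h1 : ∀ i : Fin n, 1 ≤ (i : ℕ) → (i : ℕ) < t → x i = 0)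
    (h2 : ∀ i : Fin n, t ≤ (i : ℕ) → x i = -1) :
    (∀ S : Finset (Fin n), k < S.card → ∑ i ∈ S, x i < 0) ∧
      (Finset.univ.filter (fun i : Fin n => 0 ≤ x i)).card = t ∧
      (Finset.univ.filter (fun S : Finset (Fin n) => 0 ≤ ∑ i ∈ S, x i)).card =
        2 ^ (t - 1) * ((∑ i ∈ Finset.range (k - t + 1), (n - t).choose i) + 1) := by
  set a : Fin n := ⟨0, by omega⟩
  set b : Fin n := ⟨t, by omega⟩
  have ha : x a = ((k - t : ℕ) : ℝ) := by rw [Nat.cast_sub htk]; exact h0 a rfl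
  have hZ : ∀ i ∈ Ioo a b, x i = 0 := fun i hi => by
    rw [mem_Ioo, Fin.lt_def, Fin.lt_def] at hi
    exact h1 i hi.1 hi.2
  have hT : ∀ i ∈ Ici b, x i = -1 := fun i hi => h2 i (Fin.le_def.1 (mem_Ici.1 hi))
  have huniv : (univ : Finset (Fin n)) = Ioo a b ∪ insert a (Ici b) := by
    ext i
    simp only [mem_univ, mem_union, mem_Ioo, mem_insert, mem_Ici, Fin.lt_def, Fin.le_def,
      Fin.ext_iff, true_iff, a, b]
    omega
  have hcardZ : #(Ioo a b) = t - 1 := by simp [a, b, Fin.card_Ioo]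
  have haZ : a ∉ Ioo a b := by simp
  have haT : a ∉ Ici b := by simp [a, b, Fin.le_def]; omega
  have hdisj : Disjoint (Ioo a b) (insert a (Ici b)) := disjoint_left.2 fun i hi => by
    rw [mem_Ioo] at hi
    simp only [mem_insert, mem_Ici, not_or, not_le]
    exact ⟨hi.1.ne', hi.2⟩
  refine ⟨fun S hS => sum_neg_of_card_lt haZ ha hZ hT (huniv ▸ subset_univ S) (by omega),
    ?_, ?_⟩
  · rw [huniv, card_filter_union_insert_nonneg haZ ha hZ hT, hcardZ]
    omega
  · rw [← powerset_univ, huniv,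
      card_filter_powerset_union_of_forall_eq_zero x (0 ≤ ·) hdisj hZ,
      card_filter_powerset_insert_sum_nonneg haT ha hT, hcardZ, Fin.card_Ici]
end
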